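/- arXiv:math/0208233 — 5 statements merged into one kernel-verified Lean document; each statement's English description precedes it below -/
import Mathlib

section
/- Let P be a real polynomial of degree at most d, let I ⊂ ℝ be a compact interval, and let E ⊂ I be a measurable set of positive measure. Then sup_I |P| ≤ (4|I|/|E|)^d · sup_E |P|, where |I| and |E| denote Lebesgue measure. -/
/-!
Write `μ = |E|` and `z = 2(b - a)/μ - 1 ≥ 1`, and let `cos (iπ/d)`, `i = 0, …, d`, be the
extremal points of the Chebyshev polynomial `T_d`. Choose points `t_i` in the closure of
`E ⊆ [a, b]` at which the distribution function `y ↦ |E ∩ (-∞, y]|` takes the values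
`μ (1 - cos (iπ/d)) / 2`. Since this function is 1-Lipschitz, the `t_i` are at least as spread
out as the Chebyshev extrema scaled by `μ/2`, and they are no farther from `a` than the
correspondingly scaled extrema are from `z`. Lagrange interpolation at the `t_i` then bounds
`|P(a)|` by `sup_E |P|` times the Lagrange expansion of `T_d(z)` at its extrema, and
`T_d(z) ≤ (2z)^d ≤ (4(b - a)/μ)^d`. An interior point `x` is an endpoint of `[a, x]` or
`[x, b]`, and one of these meets `E` with relative density at least `μ / (b - a)`.
-/

open MeasureTheory Set

namespace Polynomial.Chebyshev

open Real Finset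

theorem eval_T_real_le_two_mul_pow (n : ℕ) {z : ℝ} (hz : 1 ≤ z) :
    (T ℝ n).eval z ≤ (2 * z) ^ n := by
  have hθ : 0 ≤ (n : ℝ) * arcosh z := mul_nonneg n.cast_nonneg (arcosh_nonneg hz)
  calc (T ℝ n).eval z = cosh (n * arcosh z) := by
        simpa [cosh_arcosh hz] using T_real_cosh (arcosh z) n
    _ ≤ exp (n * arcosh z) := by
        rw [cosh_eq]
        linarith [exp_le_exp.2 (neg_le_self hθ)]
    _ = (z + √(z ^ 2 - 1)) ^ n := by rw [exp_nat_mul, exp_arcosh hz]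
    _ ≤ (2 * z) ^ n := by
        gcongr
        rw [two_mul]
        gcongr
        calc √(z ^ 2 - 1) ≤ √(z ^ 2) := sqrt_le_sqrt (by linarith)
          _ = z := sqrt_sq (by linarith)

/-- Lagrange interpolation of `T_n` at its extrema, where it takes the values `(-1)^i`: these are
exactly the signs of the nodal products, hence the absolute values. -/
theorem eval_T_real_eq_sum_prod_node (n : ℕ) (z : ℝ) :
    (T ℝ n).eval z = ∑ i ∈ range (n + 1),
      ∏ j ∈ (range (n + 1)).erase i, (z - node n j) / |node n i - node n j| := by
  have hdeg : (T ℝ n).degree < #(range (n + 1)) := by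
    rw [degree_T, card_range, Int.natAbs_natCast]; exact_mod_cast n.lt_succ_self
  conv_lhs => rw [Lagrange.eq_interpolate (strictAntiOn_node n).injOn hdeg]
  rw [Lagrange.interpolate_apply, eval_finsetSum]
  refine sum_congr rfl fun i hi => ?_
  have hsign := zero_lt_prod_node_sub_node (Nat.lt_succ_iff.1 (mem_range.1 hi))
  have habs : ∏ j ∈ (range (n + 1)).erase i, |node n i - node n j| =
      (-1) ^ i * ∏ j ∈ (range (n + 1)).erase i, (node n i - node n j) := by
    rw [← abs_prod, ← abs_of_pos hsign, abs_mul, abs_neg_one_pow, one_mul]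
  simp only [Lagrange.basis, Lagrange.basisDivisor, eval_mul, eval_C, eval_prod, eval_sub, eval_X,
    eval_T_real_node (mem_Iic.2 (Nat.lt_succ_iff.1 (mem_range.1 hi)))]
  rw [prod_div_distrib, habs, prod_mul_distrib, prod_inv_distrib]
  field_simp
  rw [← pow_mul, pow_mul', neg_one_sq, one_pow, one_mul]

end Polynomial.Chebyshev

open Finset in
theorem Lagrange.abs_eval_le_sum_abs_mul_prod {ι : Type*} [DecidableEq ι] {s : Finset ι}
    {v : ι → ℝ} (hv : Set.InjOn v s) {P : Polynomial ℝ} (hP : P.degree < #s) (x : ℝ) :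
    |P.eval x| ≤ ∑ i ∈ s, |P.eval (v i)| * ∏ j ∈ s.erase i, |x - v j| / |v i - v j| := by
  conv_lhs => rw [Lagrange.eq_interpolate hv hP]
  rw [Lagrange.interpolate_apply, Polynomial.eval_finsetSum]
  refine (abs_sum_le_sum_abs _ _).trans_eq (sum_congr rfl fun i _ => ?_)
  simp only [Lagrange.basis, Lagrange.basisDivisor, Polynomial.eval_mul, Polynomial.eval_C,
    Polynomial.eval_prod, Polynomial.eval_sub, Polynomial.eval_X, abs_mul, abs_prod, abs_inv]
  simp only [div_eq_inv_mul]

noncomputable def cumulativeVolume (E : Set ℝ) (x : ℝ) : ℝ := (volume (E ∩ Iic x)).toReal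

section cumulativeVolume

variable {E : Set ℝ}

theorem cumulativeVolume_mono (hE : volume E ≠ ⊤) : Monotone (cumulativeVolume E) :=
  fun _ _ hxy => ENNReal.toReal_mono (measure_ne_top_of_subset inter_subset_left hE)
    (measure_mono (inter_subset_inter_right _ (Iic_subset_Iic.2 hxy)))

theorem cumulativeVolume_le_add_sub (hE : volume E ≠ ⊤) {x y : ℝ} (hxy : x ≤ y) :
    cumulativeVolume E y ≤ cumulativeVolume E x + (y - x) := by
  have hsub : E ∩ Iic y ⊆ (E ∩ Iic x) ∪ Ioc x y := fun t ⟨htE, hty⟩ =>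
    (le_or_gt t x).imp (fun htx => ⟨htE, htx⟩) fun hxt => ⟨hxt, hty⟩
  have hfin : volume (E ∩ Iic x) ≠ ⊤ := measure_ne_top_of_subset inter_subset_left hE
  calc cumulativeVolume E y ≤ (volume (E ∩ Iic x) + volume (Ioc x y)).toReal :=
        ENNReal.toReal_mono (by simp [hfin]) ((measure_mono hsub).trans (measure_union_le _ _))
    _ = cumulativeVolume E x + (y - x) := by
        rw [ENNReal.toReal_add hfin (by simp), Real.volume_Ioc,
          ENNReal.toReal_ofReal (sub_nonneg.2 hxy), cumulativeVolume]

theorem lipschitzWith_cumulativeVolume (hE : volume E ≠ ⊤) :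
    LipschitzWith 1 (cumulativeVolume E) := by
  refine LipschitzWith.of_le_add fun x y => ?_
  rcases le_total x y with hxy | hyx
  · exact (cumulativeVolume_mono hE hxy).trans (le_add_of_nonneg_right dist_nonneg)
  · simpa [Real.dist_eq, abs_of_nonneg (sub_nonneg.2 hyx)] using
      cumulativeVolume_le_add_sub hE hyx

theorem cumulativeVolume_eq_zero {x : ℝ} (hx : ∀ y ∈ E, x ≤ y) :
    cumulativeVolume E x = 0 := by
  have hsub : E ∩ Iic x ⊆ {x} := fun y ⟨hyE, hyx⟩ => le_antisymm hyx (hx y hyE)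
  simp [cumulativeVolume, measure_mono_null hsub Real.volume_singleton]

theorem cumulativeVolume_eq_toReal_volume {x : ℝ} (hx : ∀ y ∈ E, y ≤ x) :
    cumulativeVolume E x = (volume E).toReal := by
  rw [cumulativeVolume, inter_eq_left.2 fun y hy => mem_Iic.2 (hx y hy)]

theorem mem_closure_of_cumulativeVolume_sub_lt (hE : volume E ≠ ⊤) {t : ℝ}
    (ht : ∀ ε > 0, cumulativeVolume E (t - ε) < cumulativeVolume E t) : t ∈ closure E := by
  refine Metric.mem_closure_iff.2 fun ε hε => ?_
  by_contra! hfar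
  have hsub : E ∩ Iic t ⊆ E ∩ Iic (t - ε) := fun y ⟨hyE, hyt⟩ => by
    have := hfar y hyE
    rw [Real.dist_eq, abs_of_nonneg (sub_nonneg.2 hyt)] at this
    exact ⟨hyE, by simp only [mem_Iic]; linarith⟩
  exact (ht ε hε).not_ge (ENNReal.toReal_mono (measure_ne_top_of_subset inter_subset_left hE)
    (measure_mono hsub))

theorem exists_mem_closure_cumulativeVolume_eq (hb : Bornology.IsBounded E) (hne : E.Nonempty)
    {s : ℝ} (hs : s ∈ Icc 0 (volume E).toReal) :
    ∃ t ∈ closure E, cumulativeVolume E t = s := by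
  have hfin : volume E ≠ ⊤ := hb.measure_lt_top.ne
  obtain rfl | hs0 := hs.1.eq_or_lt
  · exact ⟨sInf E, csInf_mem_closure hne hb.bddBelow,
      cumulativeVolume_eq_zero fun y hy => csInf_le hb.bddBelow hy⟩
  set S := {x | s ≤ cumulativeVolume E x}
  have hSne : S.Nonempty := ⟨sSup E, by
    simpa [S, cumulativeVolume_eq_toReal_volume fun y hy => le_csSup hb.bddAbove hy] using hs.2⟩
  have hSbdd : BddBelow S := ⟨sInf E, fun x hx => by
    by_contra! hlt
    have := cumulativeVolume_eq_zero (E := E) fun y hy => hlt.le.trans (csInf_le hb.bddBelow hy)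
    exact hs0.not_ge (this ▸ hx)⟩
  have htS : sInf S ∈ S :=
    (isClosed_le continuous_const (lipschitzWith_cumulativeVolume hfin).continuous).csInf_mem
      hSne hSbdd
  have hbelow : ∀ ε > 0, cumulativeVolume E (sInf S - ε) < s := fun ε hε => by
    by_contra! h
    linarith [csInf_le hSbdd (show sInf S - ε ∈ S from h)]
  refine ⟨sInf S, mem_closure_of_cumulativeVolume_sub_lt hfin fun ε hε =>
    (hbelow ε hε).trans_le htS, le_antisymm ?_ htS⟩
  by_contra! hgt
  have := cumulativeVolume_le_add_sub hfin (sub_le_self (sInf S) (sub_nonneg.2 hgt.le))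
  linarith [hbelow _ (sub_pos.2 hgt)]

end cumulativeVolume

theorem toReal_volume_le_of_subset_Icc {E : Set ℝ} {a b : ℝ} (hE : E ⊆ Icc a b)
    (hab : a ≤ b) :
    (volume E).toReal ≤ b - a :=
  ENNReal.toReal_le_of_le_ofReal (sub_nonneg.2 hab) (Real.volume_Icc ▸ measure_mono hE)

namespace Polynomial

open Polynomial.Chebyshev Finset

theorem abs_eval_le_mul_eval_T_of_node_spacing {P : ℝ[X]} {d : ℕ} (hP : P.natDegree ≤ d)
    {t : ℕ → ℝ} {x z c M : ℝ} (hc : 0 < c) (hM : ∀ i ≤ d, |P.eval (t i)| ≤ M)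
    (hnum : ∀ i ≤ d, |x - t i| ≤ c * (z - node d i))
    (hden : ∀ i ≤ d, ∀ j ≤ d, c * |node d i - node d j| ≤ |t i - t j|) :
    |P.eval x| ≤ M * (T ℝ d).eval z := by
  have hinj : Set.InjOn t (range (d + 1) : Finset ℕ) := fun i hi j hj hij => by
    have := hden i (mem_range_succ_iff.1 hi) j (mem_range_succ_iff.1 hj)
    rw [hij, sub_self, abs_zero] at this
    exact (strictAntiOn_node d).injOn hi hj <| sub_eq_zero.1 <| abs_nonpos_iff.1 <|
      nonpos_of_mul_nonpos_right this hc
  have hdeg : P.degree < #(range (d + 1)) := by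
    rw [card_range]
    exact (degree_le_of_natDegree_le hP).trans_lt (by exact_mod_cast d.lt_succ_self)
  have hM0 : 0 ≤ M := (abs_nonneg _).trans (hM 0 d.zero_le)
  calc |P.eval x|
      ≤ ∑ i ∈ range (d + 1), |P.eval (t i)| * ∏ j ∈ (range (d + 1)).erase i,
          |x - t j| / |t i - t j| := Lagrange.abs_eval_le_sum_abs_mul_prod hinj hdeg x
    _ ≤ ∑ i ∈ range (d + 1), M * ∏ j ∈ (range (d + 1)).erase i,
          (z - node d j) / |node d i - node d j| := by
        refine sum_le_sum fun i hi => mul_le_mul (hM i (mem_range_succ_iff.1 hi))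
          (prod_le_prod (fun j _ => by positivity) fun j hj => ?_) (by positivity) hM0
        have hj' := mem_range_succ_iff.1 (mem_of_mem_erase hj)
        have hnumj := hnum j hj'
        have hij : node d i ≠ node d j := fun h =>
          ne_of_mem_erase hj ((strictAntiOn_node d).injOn (mem_of_mem_erase hj) hi h.symm)
        calc |x - t j| / |t i - t j| ≤ c * (z - node d j) / (c * |node d i - node d j|) :=
              div_le_div₀ ((abs_nonneg _).trans hnumj) hnumj (by positivity)
                (hden i (mem_range_succ_iff.1 hi) j hj')
          _ = (z - node d j) / |node d i - node d j| := mul_div_mul_left _ _ hc.ne'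
    _ = M * (T ℝ d).eval z := by rw [eval_T_real_eq_sum_prod_node, mul_sum]

theorem abs_eval_le_of_subset_Icc_left {P : ℝ[X]} {d : ℕ} (hP : P.natDegree ≤ d)
    {E : Set ℝ} {x b μ M : ℝ} (hE : E ⊆ Icc x b) (hμ : 0 < μ)
    (hμE : μ ≤ (volume E).toReal) (hM : ∀ y ∈ E, |P.eval y| ≤ M) :
    |P.eval x| ≤ (4 * (b - x) / μ) ^ d * M := by
  obtain ⟨y, hy⟩ : E.Nonempty := nonempty_of_measure_ne_zero (μ := volume) fun h => by
    rw [h, ENNReal.toReal_zero] at hμE; linarith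
  have hxb : x ≤ b := (hE hy).1.trans (hE hy).2
  have hb : Bornology.IsBounded E := Metric.isBounded_Icc x b |>.subset hE
  have hfin : volume E ≠ ⊤ := hb.measure_lt_top.ne
  have hμb : μ ≤ b - x := hμE.trans (toReal_volume_le_of_subset_Icc hE hxb)
  set z := 2 * (b - x) / μ - 1
  have hz : 1 ≤ z := by
    rw [le_sub_iff_add_le, le_div_iff₀ hμ]; linarith
  choose t htE htF using fun i => exists_mem_closure_cumulativeVolume_eq hb ⟨y, hy⟩
    (s := μ * (1 - node d i) / 2) ⟨by nlinarith [(node_mem_Icc (n := d) (i := i)).2],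
      by nlinarith [(node_mem_Icc (n := d) (i := i)).1]⟩
  have hden (i j : ℕ) : μ / 2 * |node d i - node d j| ≤ |t i - t j| := by
    have := (lipschitzWith_cumulativeVolume hfin).dist_le_mul (t i) (t j)
    rw [Real.dist_eq, Real.dist_eq, htF, htF, NNReal.coe_one, one_mul] at this
    rwa [show μ * (1 - node d i) / 2 - μ * (1 - node d j) / 2 = μ / 2 * (node d j - node d i) by
      ring, abs_mul, abs_of_pos (half_pos hμ), abs_sub_comm] at this
  have hnum (i : ℕ) : |x - t i| ≤ μ / 2 * (z - node d i) := by
    have htI := closure_minimal hE isClosed_Icc (htE i)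
    have hgap := cumulativeVolume_le_add_sub hfin htI.2
    rw [htF, cumulativeVolume_eq_toReal_volume fun y hy => (hE hy).2] at hgap
    rw [abs_of_nonpos (by linarith [htI.1]), show μ / 2 * (z - node d i) =
      b - x - μ * (1 + node d i) / 2 by simp only [z]; field_simp; ring]
    linarith
  have hM0 : 0 ≤ M := (abs_nonneg _).trans (hM y hy)
  have hMt (i : ℕ) : |P.eval (t i)| ≤ M :=
    closure_minimal hM (isClosed_le P.continuous.abs continuous_const) (htE i)
  calc |P.eval x| ≤ M * (T ℝ d).eval z :=
        abs_eval_le_mul_eval_T_of_node_spacing hP (half_pos hμ) (fun i _ => hMt i)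
          (fun i _ => hnum i) fun i _ j _ => hden i j
    _ ≤ M * (2 * z) ^ d := by grw [eval_T_real_le_two_mul_pow d hz]
    _ ≤ (4 * (b - x) / μ) ^ d * M := by
        rw [mul_comm]
        gcongr
        linarith [show 2 * z = 4 * (b - x) / μ - 2 by ring]

theorem abs_eval_le_of_subset_Icc_right {P : ℝ[X]} {d : ℕ} (hP : P.natDegree ≤ d)
    {E : Set ℝ} {a x μ M : ℝ} (hE : E ⊆ Icc a x) (hμ : 0 < μ)
    (hμE : μ ≤ (volume E).toReal) (hM : ∀ y ∈ E, |P.eval y| ≤ M) :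
    |P.eval x| ≤ (4 * (x - a) / μ) ^ d * M := by
  have hQ : (P.comp (-X)).natDegree ≤ d :=
    natDegree_comp_le.trans (by simpa using hP)
  have hE' : -E ⊆ Icc (-x) (-a) := fun y hy => by
    have := hE (mem_neg.1 hy); constructor <;> linarith [this.1, this.2]
  have := abs_eval_le_of_subset_Icc_left hQ hE' hμ (by rwa [Measure.measure_neg])
    fun y hy => by simpa using hM _ (mem_neg.1 hy)
  simpa [sub_eq_add_neg, add_comm] using this

end Polynomial

theorem density_le_inter_Icc_right_or_left {E : Set ℝ} {a b x : ℝ} (hab : a < b)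
    (hE : E ⊆ Icc a b) (hx : x ∈ Icc a b) :
    (x < b ∧ (volume E).toReal * (b - x) ≤ (volume (E ∩ Icc x b)).toReal * (b - a)) ∨
      (a < x ∧ (volume E).toReal * (x - a) ≤ (volume (E ∩ Icc a x)).toReal * (b - a)) := by
  have hL := toReal_volume_le_of_subset_Icc (E := E ∩ Icc a x) inter_subset_right hx.1
  have hR := toReal_volume_le_of_subset_Icc (E := E ∩ Icc x b) inter_subset_right hx.2
  have hcover : E = (E ∩ Icc a x) ∪ (E ∩ Icc x b) := by
    refine (union_subset inter_subset_left inter_subset_left).antisymm' fun y hy =>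
      (le_total y x).imp (fun hyx => ⟨hy, (hE hy).1, hyx⟩) fun hxy => ⟨hy, hxy, (hE hy).2⟩
  have hsum : (volume E).toReal ≤
      (volume (E ∩ Icc a x)).toReal + (volume (E ∩ Icc x b)).toReal := by
    conv_lhs => rw [hcover]
    exact measureReal_union_le _ _
  by_cases h : x < b ∧ (volume E).toReal * (b - x) ≤ (volume (E ∩ Icc x b)).toReal * (b - a)
  · exact Or.inl h
  · right
    rw [not_and_or, not_lt, not_le] at h
    have hax := hx.1
    rcases h with hbx | h <;> constructor <;> nlinarith

theorem remez_inequality_general (P : Polynomial ℝ) (d : ℕ) (hP : P.natDegree ≤ d)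
    (a b : ℝ) (hab : a < b) (E : Set ℝ) (hE : E ⊆ Icc a b)
    (hEpos : 0 < volume E) :
    ∀ x ∈ Icc a b,
      |P.eval x| ≤ (4 * (b - a) / (volume E).toReal) ^ d *
        sSup ((fun y => |P.eval y|) '' E) := by
  intro x hx
  set m := (volume E).toReal
  have hm : 0 < m := ENNReal.toReal_pos hEpos.ne'
    ((Metric.isBounded_Icc a b).subset hE).measure_lt_top.ne
  have hM : ∀ y ∈ E, |P.eval y| ≤ sSup ((fun y => |P.eval y|) '' E) := fun y hy =>
    le_csSup ((isCompact_Icc.bddAbove_image P.continuous.abs.continuousOn).mono (image_mono hE))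
      (mem_image_of_mem _ hy)
  have hba : 0 < b - a := sub_pos.2 hab
  rcases density_le_inter_Icc_right_or_left hab hE hx with ⟨hxb, hR⟩ | ⟨hax, hL⟩
  · have := P.abs_eval_le_of_subset_Icc_left hP inter_subset_right
      (div_pos (mul_pos hm (sub_pos.2 hxb)) hba) ((div_le_iff₀ hba).2 hR) fun y hy => hM y hy.1
    rwa [show 4 * (b - x) / (m * (b - x) / (b - a)) = 4 * (b - a) / m by
      field_simp [(sub_pos.2 hxb).ne']] at this
  · have := P.abs_eval_le_of_subset_Icc_right hP inter_subset_right
      (div_pos (mul_pos hm (sub_pos.2 hax)) hba) ((div_le_iff₀ hba).2 hL) fun y hy => hM y hy.1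
    rwa [show 4 * (x - a) / (m * (x - a) / (b - a)) = 4 * (b - a) / m by
      field_simp [(sub_pos.2 hax).ne']] at this

theorem remez_inequality (P : Polynomial ℝ) (d : ℕ) (hP : P.natDegree ≤ d)
    (a b : ℝ) (hab : a < b) (E : Set ℝ) (hE : E ⊆ Icc a b) (hEm : MeasurableSet E)
    (hEpos : 0 < volume E) :
    ∀ x ∈ Icc a b,
      |P.eval x| ≤ (4 * (b - a) / (volume E).toReal) ^ d *
        sSup ((fun y => |P.eval y|) '' E) :=
  remez_inequality_general P d hP a b hab E hE hEpos
end

section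
/- Let f be C^{n+1} on a compact interval I with ‖f^{(n+1)}‖_I ≤ (n+1)!·m_{n+1}, and let E ⊆ I be a measurable subset of positive measure containing at least n+1 points spaced by at least |E|/n. Then ‖f‖_I ≤ (2e|I|/|E|)^n · ‖f‖_E + m_{n+1}·|I|^{n+1}. -/
/-!
Interpolate `f` at `n + 1` nodes of `E` with consecutive gaps `δ = |E| / n` by its Lagrange
polynomial `P`. The gaps give `∏_{j ≠ i} |x_i - x_j| ≥ δ ^ n i! (n - i)!`, so on `I` the Lagrange
basis sums to at most `(2|I|/δ) ^ n / n! ≤ (2e|I|/|E|) ^ n`, using `n ^ n / n! ≤ e ^ n`; this bounds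
`|P|` by that constant times `‖f‖_E`. The remainder `f - P` is `f^(n+1)(ξ) / (n+1)!` times the nodal
polynomial, by `n + 1` applications of Rolle's theorem to `f - P - c ω`.
-/

open Set MeasureTheory Finset Polynomial Nat

namespace Polynomial

variable {𝕜 : Type*} [NontriviallyNormedField 𝕜]

theorem iteratedDeriv_eval (p : 𝕜[X]) (k : ℕ) :
    iteratedDeriv k (fun t => p.eval t) = fun t => (derivative^[k] p).eval t := by
  induction k generalizing p with
  | zero => simp
  | succ k ih =>
    have hd : _root_.deriv (fun t => p.eval t) = fun t => p.derivative.eval t := by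
      ext t; exact p.deriv
    rw [iteratedDeriv_succ', hd, ih, Function.iterate_succ_apply]

theorem iteratedDerivWithin_eval {s : Set 𝕜} (hs : UniqueDiffOn 𝕜 s) {x : 𝕜} (hx : x ∈ s)
    (p : 𝕜[X]) (k : ℕ) :
    iteratedDerivWithin k (fun t => p.eval t) s x = (derivative^[k] p).eval x := by
  have hp : ContDiff 𝕜 k fun t => p.eval t := by simpa using p.contDiff_aeval (𝕜 := 𝕜) k
  rw [iteratedDerivWithin_eq_iteratedDeriv hs hp.contDiffAt hx, iteratedDeriv_eval]

theorem iterate_derivative_natDegree {R : Type*} [CommSemiring R] (p : R[X]) :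
    derivative^[p.natDegree] p = C (p.natDegree ! * p.leadingCoeff) := by
  ext m
  rw [coeff_iterate_derivative, coeff_C]
  rcases m with _ | m
  · simp [Nat.descFactorial_self, nsmul_eq_mul]
  · simp [coeff_eq_zero_of_natDegree_lt (by omega : p.natDegree < m + 1 + p.natDegree)]

end Polynomial

namespace Lagrange

variable {ι : Type*}

theorem abs_eval_nodal_le (s : Finset ι) (v : ι → ℝ) {y L : ℝ} (hy : ∀ i ∈ s, |y - v i| ≤ L) :
    |(nodal s v).eval y| ≤ L ^ #s := by
  rw [eval_nodal, abs_prod]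
  exact (prod_le_prod (fun _ _ => abs_nonneg _) hy).trans_eq (prod_const L)

variable [DecidableEq ι]

theorem iterate_derivative_interpolate_add_C_mul_nodal {F : Type*} [Field F] [CharZero F]
    {s : Finset ι} {v : ι → F} (hv : InjOn v s) (r : ι → F) (c : F) :
    derivative^[#s] (interpolate s v r + C c * nodal s v) = C (c * (#s)!) := by
  have hP : derivative^[#s] (interpolate s v r) = 0 := by
    rcases eq_or_ne (interpolate s v r) 0 with h | h
    · rw [h, iterate_derivative_zero]
    · exact iterate_derivative_eq_zero
        ((natDegree_lt_iff_degree_lt h).2 (degree_interpolate_lt r hv))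
  have hQ := iterate_derivative_natDegree (nodal s v)
  rw [natDegree_nodal, nodal_monic.leadingCoeff, mul_one] at hQ
  rw [iterate_map_add, hP, iterate_derivative_C_mul, hQ, zero_add, ← C_mul, mul_comm]

theorem abs_eval_interpolate_le (s : Finset ι) (v r : ι → ℝ) (y : ℝ) :
    |(interpolate s v r).eval y| ≤ ∑ i ∈ s, |r i| * ∏ j ∈ s.erase i, |y - v j| / |v i - v j| := by
  rw [interpolate_apply, eval_finsetSum]
  refine (abs_sum_le_sum_abs _ _).trans (sum_le_sum fun i _ => ?_)
  rw [eval_mul, eval_C, abs_mul, Lagrange.basis, eval_prod, abs_prod]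
  refine le_of_eq (congrArg _ (prod_congr rfl fun j _ => ?_))
  rw [basisDivisor, eval_mul, eval_C, eval_sub, eval_X, eval_C, abs_mul, abs_inv,
    abs_sub_comm (v i), div_eq_inv_mul]

end Lagrange

theorem Nat.prod_erase_dist_eq {n i : ℕ} (hi : i ≤ n) :
    ∏ j ∈ (range (n + 1)).erase i, Nat.dist i j = i ! * (n - i)! := by
  have hsplit : (range (n + 1)).erase i = range i ∪ Ico (i + 1) (n + 1) := by
    ext j; simp only [Finset.mem_erase, Finset.mem_range, Finset.mem_union, Finset.mem_Ico]; omega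
  rw [hsplit, prod_union (disjoint_left.2 fun j h h' => by
    simp only [Finset.mem_range, Finset.mem_Ico] at h h'; omega)]
  congr 1
  · rw [← Nat.descFactorial_self, Nat.descFactorial_eq_prod_range]
    exact prod_congr rfl fun j hj => by simp only [Finset.mem_range] at hj; simp only [Nat.dist]; omega
  · rw [prod_Ico_eq_prod_range, ← prod_range_add_one_eq_factorial]
    refine prod_congr (by congr 1; omega) fun j _ => ?_
    simp only [Nat.dist]; omega

section Separated

variable {n : ℕ} {x : Fin (n + 1) → ℝ} {δ : ℝ}

theorem sub_mul_le_sub_of_forall_le_succ_sub (hx : ∀ i : Fin n, δ ≤ x i.succ - x i.castSucc)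
    {i j : Fin (n + 1)} (hij : i ≤ j) : ((j - i : ℕ) : ℝ) * δ ≤ x j - x i := by
  obtain ⟨k, hk⟩ := Nat.exists_eq_add_of_le (Fin.le_iff_val_le_val.1 hij)
  induction k generalizing j with
  | zero => simp [Fin.ext (hk.trans (add_zero _))]
  | succ k ih =>
    have hlt : (i : ℕ) + k < n := by omega
    have hprev := ih (j := ⟨i + k, by omega⟩) (Fin.le_iff_val_le_val.2 (by simp)) rfl
    have hstep := hx ⟨i + k, hlt⟩
    rw [show (⟨i + k, hlt⟩ : Fin n).succ = j from Fin.ext (by simp; omega)] at hstep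
    have hcast : (((j : ℕ) - i : ℕ) : ℝ) = ((⟨i + k, by omega⟩ : Fin (n + 1)) - i : ℕ) + 1 := by
      rw [hk]; push_cast; simp
    rw [hcast]
    simp only [Fin.castSucc_mk] at hstep
    linarith

theorem dist_mul_le_abs_sub (hx : ∀ i : Fin n, δ ≤ x i.succ - x i.castSucc) (i j : Fin (n + 1)) :
    (Nat.dist i j : ℝ) * δ ≤ |x i - x j| := by
  rcases le_total i j with h | h
  · rw [Nat.dist_eq_sub_of_le h, abs_sub_comm]
    exact (sub_mul_le_sub_of_forall_le_succ_sub hx h).trans (le_abs_self _)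
  · rw [Nat.dist_comm, Nat.dist_eq_sub_of_le h]
    exact (sub_mul_le_sub_of_forall_le_succ_sub hx h).trans (le_abs_self _)

theorem pow_mul_factorial_le_prod_abs_sub (hδ : 0 ≤ δ)
    (hx : ∀ i : Fin n, δ ≤ x i.succ - x i.castSucc) (i : Fin (n + 1)) :
    δ ^ n * (i ! * (n - i)! : ℕ) ≤ ∏ j ∈ univ.erase i, |x i - x j| := by
  have hdist : ∏ j ∈ univ.erase i, Nat.dist i j = i ! * (n - i)! := by
    rw [← Nat.prod_erase_dist_eq (Nat.lt_succ_iff.1 i.isLt), ← image_fin_univ,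
      ← image_erase Fin.val_injective, prod_image Fin.val_injective.injOn]
  calc δ ^ n * (i ! * (n - i)! : ℕ)
      = ∏ j ∈ univ.erase i, ((Nat.dist i j : ℝ) * δ) := by
        rw [prod_mul_distrib, prod_const, card_erase_of_mem (mem_univ i), Finset.card_univ,
          Fintype.card_fin, ← Nat.cast_prod, hdist, add_tsub_cancel_right, mul_comm]
    _ ≤ ∏ j ∈ univ.erase i, |x i - x j| :=
        prod_le_prod (fun j _ => by positivity) fun j _ => dist_mul_le_abs_sub hx i j

theorem sum_prod_abs_div_le (hδ : 0 < δ) (hx : ∀ i : Fin n, δ ≤ x i.succ - x i.castSucc)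
    {y L : ℝ} (hy : ∀ j, |y - x j| ≤ L) :
    ∑ i, ∏ j ∈ univ.erase i, |y - x j| / |x i - x j| ≤ (2 * L / δ) ^ n / n ! := by
  have hL : 0 ≤ L := (abs_nonneg _).trans (hy 0)
  calc ∑ i, ∏ j ∈ univ.erase i, |y - x j| / |x i - x j|
      ≤ ∑ i : Fin (n + 1), L ^ n / (δ ^ n * (i ! * (n - i)! : ℕ)) := by
        refine sum_le_sum fun i _ => ?_
        rw [prod_div_distrib]
        refine div_le_div₀ (by positivity) ?_ (by positivity)
          (pow_mul_factorial_le_prod_abs_sub hδ.le hx i)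
        refine (prod_le_prod (fun _ _ => abs_nonneg _) fun j _ => hy j).trans_eq ?_
        rw [prod_const, card_erase_of_mem (mem_univ i), Finset.card_univ, Fintype.card_fin,
          add_tsub_cancel_right]
    _ = (L / δ) ^ n / n ! * ∑ i : Fin (n + 1), (n.choose i : ℝ) := by
        rw [mul_sum]
        refine sum_congr rfl fun i _ => ?_
        have := hδ.ne'
        rw [Nat.cast_choose ℝ (Nat.lt_succ_iff.1 i.isLt), div_pow]
        push_cast
        field_simp
    _ = (2 * L / δ) ^ n / n ! := by
        rw [Fin.sum_univ_eq_sum_range (fun i => (n.choose i : ℝ)), ← Nat.cast_sum,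
          Nat.sum_range_choose]
        push_cast
        ring

theorem abs_eval_interpolate_le_of_separated (hδ : 0 < δ)
    (hx : ∀ i : Fin n, δ ≤ x i.succ - x i.castSucc) {y L S : ℝ} (hy : ∀ j, |y - x j| ≤ L)
    {r : Fin (n + 1) → ℝ} (hr : ∀ i, |r i| ≤ S) :
    |(Lagrange.interpolate univ x r).eval y| ≤ (2 * L / δ) ^ n / n ! * S := by
  have hS : 0 ≤ S := (abs_nonneg _).trans (hr 0)
  calc |(Lagrange.interpolate univ x r).eval y|
      ≤ ∑ i, |r i| * ∏ j ∈ univ.erase i, |y - x j| / |x i - x j| :=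
        Lagrange.abs_eval_interpolate_le _ _ _ _
    _ ≤ ∑ i, S * ∏ j ∈ univ.erase i, |y - x j| / |x i - x j| := by gcongr with i; exact hr i
    _ = (∑ i, ∏ j ∈ univ.erase i, |y - x j| / |x i - x j|) * S := by rw [sum_mul]; simp_rw [mul_comm]
    _ ≤ (2 * L / δ) ^ n / n ! * S := by gcongr; exact sum_prod_abs_div_le hδ hx hy

end Separated

theorem Real.mul_natCast_pow_div_factorial_le {c : ℝ} (hc : 0 ≤ c) (n : ℕ) :
    (c * n) ^ n / n ! ≤ (Real.exp 1 * c) ^ n :=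
  calc (c * n) ^ n / n ! = c ^ n * ((n : ℝ) ^ n / n !) := by ring
    _ ≤ c ^ n * Real.exp n := by gcongr; exact Real.pow_div_factorial_le_exp _ n.cast_nonneg n
    _ = (Real.exp 1 * c) ^ n := by rw [mul_pow, Real.exp_one_pow, mul_comm]

section Rolle

variable {a b : ℝ} {F : ℝ → ℝ}

theorem exists_derivWithin_Icc_eq_zero (hF : ContinuousOn F (Icc a b)) {u v : ℝ} (huv : u < v)
    (hu : u ∈ Icc a b) (hv : v ∈ Icc a b) (hFuv : F u = F v) :
    ∃ c ∈ Ioo u v, derivWithin F (Icc a b) c = 0 := by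
  obtain ⟨c, hc, hc0⟩ := exists_deriv_eq_zero huv (hF.mono (Icc_subset_Icc hu.1 hv.2)) hFuv
  refine ⟨c, hc, ?_⟩
  rwa [derivWithin_of_mem_nhds (Icc_mem_nhds (hu.1.trans_lt hc.1) (hc.2.trans_le hv.2))]

theorem exists_iteratedDerivWithin_eq_zero_of_strictMono (hab : a < b) {k : ℕ}
    (hF : ContDiffOn ℝ k F (Icc a b)) {y : Fin (k + 1) → ℝ} (hy : StrictMono y)
    (hyI : ∀ i, y i ∈ Icc a b) (hFy : ∀ i, F (y i) = 0) :
    ∃ c ∈ Icc a b, iteratedDerivWithin k F (Icc a b) c = 0 := by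
  induction k generalizing F with
  | zero => exact ⟨y 0, hyI 0, by simpa using hFy 0⟩
  | succ k ih =>
    have hzeros : ∀ i : Fin (k + 1), ∃ c ∈ Ioo (y i.castSucc) (y i.succ),
        derivWithin F (Icc a b) c = 0 := fun i =>
      exists_derivWithin_Icc_eq_zero hF.continuousOn (hy (Fin.castSucc_lt_succ (i := i))) (hyI _)
        (hyI _) ((hFy _).trans (hFy _).symm)
    choose z hz hz0 using hzeros
    have hzI : ∀ i, z i ∈ Icc a b := fun i =>
      ⟨(hyI _).1.trans (hz i).1.le, (hz i).2.le.trans (hyI _).2⟩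
    have hzmono : StrictMono z := Fin.strictMono_iff_lt_succ.2 fun i =>
      calc z i.castSucc < y i.castSucc.succ := (hz _).2
        _ = y i.succ.castSucc := by rw [Fin.succ_castSucc]
        _ < z i.succ := (hz _).1
    have hF' : ContDiffOn ℝ k (derivWithin F (Icc a b)) (Icc a b) :=
      hF.derivWithin (uniqueDiffOn_Icc hab) (by norm_cast)
    rw [iteratedDerivWithin_succ']
    exact ih hF' hzmono hzI hz0

theorem exists_iteratedDerivWithin_eq_zero (hab : a < b) {k : ℕ}
    (hF : ContDiffOn ℝ k F (Icc a b)) {s : Finset ℝ} (hs : #s = k + 1)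
    (hsI : ∀ t ∈ s, t ∈ Icc a b) (hFs : ∀ t ∈ s, F t = 0) :
    ∃ c ∈ Icc a b, iteratedDerivWithin k F (Icc a b) c = 0 :=
  exists_iteratedDerivWithin_eq_zero_of_strictMono hab hF (s.orderEmbOfFin hs).strictMono
    (fun i => hsI _ (s.orderEmbOfFin_mem hs i)) (fun i => hFs _ (s.orderEmbOfFin_mem hs i))

end Rolle

section Interpolation

variable {a b : ℝ} {n : ℕ} {f : ℝ → ℝ} {x : Fin (n + 1) → ℝ}

theorem iteratedDerivWithin_eval_interpolate_add_C_mul_nodal (hab : a < b)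
    (hx : Function.Injective x) (r : Fin (n + 1) → ℝ) (c : ℝ) {ξ : ℝ} (hξ : ξ ∈ Icc a b) :
    iteratedDerivWithin (n + 1)
      (fun t => (Lagrange.interpolate univ x r + C c * Lagrange.nodal univ x).eval t) (Icc a b) ξ =
      c * (n + 1)! := by
  have h := Lagrange.iterate_derivative_interpolate_add_C_mul_nodal (s := univ) hx.injOn r c
  rw [Finset.card_univ, Fintype.card_fin] at h
  rw [iteratedDerivWithin_eval (uniqueDiffOn_Icc hab) hξ, h, eval_C]

theorem exists_sub_eval_interpolate_eq (hab : a < b) (hf : ContDiffOn ℝ (n + 1) f (Icc a b))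
    (hx : Function.Injective x) (hxI : ∀ i, x i ∈ Icc a b) {y : ℝ} (hy : y ∈ Icc a b) :
    ∃ ξ ∈ Icc a b, f y - (Lagrange.interpolate univ x fun i => f (x i)).eval y =
      iteratedDerivWithin (n + 1) f (Icc a b) ξ / (n + 1)! * (Lagrange.nodal univ x).eval y := by
  set P := Lagrange.interpolate univ x fun i => f (x i)
  set Q := Lagrange.nodal univ x
  have hPx : ∀ i, P.eval (x i) = f (x i) := fun i =>
    Lagrange.eval_interpolate_at_node _ hx.injOn (mem_univ i)
  by_cases hyx : ∃ i, x i = y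
  · obtain ⟨i, rfl⟩ := hyx
    refine ⟨a, left_mem_Icc.2 hab.le, ?_⟩
    rw [hPx, Lagrange.eval_nodal_at_node (mem_univ i), sub_self, mul_zero]
  push Not at hyx
  have hQy : Q.eval y ≠ 0 := by
    rw [Lagrange.eval_nodal]
    exact prod_ne_zero_iff.2 fun i _ => sub_ne_zero.2 (hyx i).symm
  -- `c` is chosen so that `g` vanishes at `y` as well as at the `n + 1` nodes.
  set c := (f y - P.eval y) / Q.eval y with hc
  set p := P + C c * Q
  set g := fun t => f t - p.eval t
  set s := insert y (Finset.univ.image x)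
  have hs : #s = n + 1 + 1 := by
    rw [card_insert_of_notMem (by simpa using hyx), card_image_of_injective _ hx, Finset.card_univ,
      Fintype.card_fin]
  have hsI : ∀ t ∈ s, t ∈ Icc a b := by
    simp only [s, Finset.mem_insert, Finset.mem_image, Finset.mem_univ, true_and]
    rintro t (rfl | ⟨i, rfl⟩)
    exacts [hy, hxI i]
  have hgs : ∀ t ∈ s, g t = 0 := by
    simp only [s, Finset.mem_insert, Finset.mem_image, Finset.mem_univ, true_and]
    rintro t (rfl | ⟨i, rfl⟩)
    · simp only [g, p, eval_add, eval_mul, eval_C, hc, div_mul_cancel₀ _ hQy]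
      ring
    · simp [g, p, hPx, Q, Lagrange.eval_nodal_at_node]
  have hud := uniqueDiffOn_Icc hab
  have hf' : ContDiffOn ℝ (n + 1 : ℕ) f (Icc a b) := by exact_mod_cast hf
  have hp : ContDiff ℝ (n + 1 : ℕ) fun t => p.eval t := by simpa using p.contDiff_aeval (𝕜 := ℝ) _
  obtain ⟨ξ, hξ, hgξ⟩ := exists_iteratedDerivWithin_eq_zero hab (hf'.sub hp.contDiffOn) hs hsI hgs
  change iteratedDerivWithin (n + 1) (f - fun t => p.eval t) (Icc a b) ξ = 0 at hgξ
  rw [iteratedDerivWithin_sub hξ hud (hf'.contDiffWithinAt hξ) hp.contDiffWithinAt,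
    iteratedDerivWithin_eval_interpolate_add_C_mul_nodal hab hx _ c hξ,
    sub_eq_zero] at hgξ
  refine ⟨ξ, hξ, ?_⟩
  rw [hgξ, mul_div_cancel_right₀ _ (by positivity), hc, div_mul_cancel₀ _ hQy]

theorem abs_sub_eval_interpolate_le (hab : a < b) (hf : ContDiffOn ℝ (n + 1) f (Icc a b))
    {m : ℝ} (hm : ∀ ξ ∈ Icc a b,
      |iteratedDerivWithin (n + 1) f (Icc a b) ξ| ≤ ((n + 1)! : ℝ) * m)
    (hx : Function.Injective x) (hxI : ∀ i, x i ∈ Icc a b) {y : ℝ} (hy : y ∈ Icc a b) :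
    |f y - (Lagrange.interpolate univ x fun i => f (x i)).eval y| ≤
      m * |(Lagrange.nodal univ x).eval y| := by
  obtain ⟨ξ, hξ, h⟩ := exists_sub_eval_interpolate_eq hab hf hx hxI hy
  rw [h, abs_mul, abs_div, Nat.abs_cast]
  gcongr
  exact (div_le_iff₀' (by positivity)).2 (hm ξ hξ)

end Interpolation

theorem local_estimate_with_remainder_general (n : ℕ) (hn : 1 ≤ n) (a b : ℝ) (hab : a < b)
    (f : ℝ → ℝ) (hf : ContDiffOn ℝ (n + 1) f (Icc a b))
    (m : ℝ) (hm : ∀ x ∈ Icc a b,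
      |iteratedDerivWithin (n + 1) f (Icc a b) x| ≤ ((n + 1).factorial : ℝ) * m)
    (E : Set ℝ) (hE : E ⊆ Icc a b) (hEpos : 0 < volume E)
    (hpts : ∃ x : Fin (n + 1) → ℝ, (∀ i, x i ∈ E) ∧ StrictMono x ∧
      ∀ i : Fin n, (volume E).toReal / n ≤ x i.succ - x i.castSucc) :
    ∀ y ∈ Icc a b,
      |f y| ≤ (2 * Real.exp 1 * (b - a) / (volume E).toReal) ^ n *
          sSup ((fun z => |f z|) '' E) + m * (b - a) ^ (n + 1) := by
  intro y hy
  obtain ⟨x, hxE, hxmono, hxgap⟩ := hpts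
  set ε := (volume E).toReal
  set S := sSup ((fun z => |f z|) '' E)
  have hxI : ∀ i, x i ∈ Icc a b := fun i => hE (hxE i)
  have hε : 0 < ε := ENNReal.toReal_pos hEpos.ne' ((measure_mono hE).trans_lt measure_Icc_lt_top).ne
  have hδ : 0 < ε / n := div_pos hε (by exact_mod_cast hn)
  have hfS : ∀ i, |f (x i)| ≤ S := fun i => le_csSup ((isCompact_Icc.image_of_continuousOn
    hf.continuousOn.abs).bddAbove.mono (image_mono hE)) ⟨x i, hxE i, rfl⟩
  have hyx : ∀ j, |y - x j| ≤ b - a := fun j => by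
    simpa [Real.dist_eq] using Real.dist_le_of_mem_Icc hy (hxI j)
  have hm0 : 0 ≤ m := nonneg_of_mul_nonneg_right ((abs_nonneg _).trans (hm a ⟨le_rfl, hab.le⟩))
    (by positivity)
  have hK : (2 * (b - a) / (ε / n)) ^ n / n ! ≤ (2 * Real.exp 1 * (b - a) / ε) ^ n := by
    rw [div_div_eq_mul_div, mul_div_right_comm]
    convert Real.mul_natCast_pow_div_factorial_le (by positivity : 0 ≤ 2 * (b - a) / ε) n using 2
    ring
  set P := Lagrange.interpolate univ x fun i => f (x i)
  calc |f y| = |P.eval y + (f y - P.eval y)| := by rw [add_sub_cancel]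
    _ ≤ |P.eval y| + |f y - P.eval y| := abs_add_le _ _
    _ ≤ (2 * Real.exp 1 * (b - a) / ε) ^ n * S + m * (b - a) ^ (n + 1) := by
      gcongr
      · exact (abs_eval_interpolate_le_of_separated hδ hxgap hyx hfS).trans
          (by gcongr; exact (abs_nonneg _).trans (hfS 0))
      · refine (abs_sub_eval_interpolate_le hab hf hm hxmono.injective hxI hy).trans ?_
        simpa using mul_le_mul_of_nonneg_left (Lagrange.abs_eval_nodal_le univ x fun j _ => hyx j) hm0

theorem local_estimate_with_remainder (n : ℕ) (hn : 1 ≤ n) (a b : ℝ) (hab : a < b)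
    (f : ℝ → ℝ) (hf : ContDiffOn ℝ (n + 1) f (Icc a b))
    (m : ℝ) (hm : ∀ x ∈ Icc a b,
      |iteratedDerivWithin (n + 1) f (Icc a b) x| ≤ ((n + 1).factorial : ℝ) * m)
    (E : Set ℝ) (hE : E ⊆ Icc a b) (hEm : MeasurableSet E) (hEpos : 0 < volume E)
    (hpts : ∃ x : Fin (n + 1) → ℝ, (∀ i, x i ∈ E) ∧ StrictMono x ∧
      ∀ i : Fin n, (volume E).toReal / n ≤ x i.succ - x i.castSucc) :
    ∀ y ∈ Icc a b,
      |f y| ≤ (2 * Real.exp 1 * (b - a) / (volume E).toReal) ^ n *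
          sSup ((fun z => |f z|) '' E) + m * (b - a) ^ (n + 1) :=
  local_estimate_with_remainder_general n hn a b hab f hf m hm E hE hEpos hpts
end

section
/- (Corollary 2.7) Let f ∈ C^∞([0,1]) with ‖f^{(j)}‖_{[0,1]} ≤ M_j for all j, {M_j} logarithmically convex, M_0 = 1. Suppose f^{(j)}(0) = 0 for all j ≥ 0, and let 0 < c ≤ 1 with 𝔐 := max_{[0,c]} |f| > 0. Then ∑_{j ≥ ⌈log(1/𝔐)⌉ + 1} M_{j-1}/M_j < e·c. -/
open Set Finset

/-- Truncated exponential series. -/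
noncomputable def expPoly (m : ℕ) (t : ℝ) : ℝ :=
  ∑ i ∈ Finset.range (m + 1), t ^ i / (Nat.factorial i)

lemma expPoly_nonneg (m : ℕ) {t : ℝ} (ht : 0 ≤ t) : 0 ≤ expPoly m t :=
  Finset.sum_nonneg fun i _ => by positivity

lemma expPoly_at_zero (m : ℕ) : expPoly m 0 = 1 := by
  rw [expPoly, Finset.sum_eq_single 0]
  · simp
  · intro i _ hi
    simp [zero_pow hi]
  · intro h
    exact absurd (Finset.mem_range.2 (Nat.succ_pos m)) h

lemma expPoly_zero (t : ℝ) : expPoly 0 t = 1 := by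
  simp [expPoly]

lemma expPoly_mono (m : ℕ) {t : ℝ} (h0 : 0 ≤ t) (h1 : t ≤ 1) :
    expPoly m t ≤ expPoly m 1 := by
  apply Finset.sum_le_sum
  intro i _
  have hfac : (0:ℝ) < (Nat.factorial i : ℝ) := by positivity
  have hpow : t ^ i ≤ 1 ^ i := pow_le_pow_left₀ h0 h1 i
  exact (div_le_div_iff_of_pos_right hfac).mpr hpow

lemma expPoly_one_lt (m : ℕ) : expPoly m 1 < Real.exp 1 := by
  have h1 : expPoly m 1 < expPoly (m + 1) 1 := by
    rw [expPoly, expPoly, Finset.sum_range_succ _ (m + 1)]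
    have : (0:ℝ) < 1 ^ (m + 1) / (Nat.factorial (m + 1)) := by positivity
    linarith
  have h2 : expPoly (m + 1) 1 ≤ Real.exp 1 := by
    rw [expPoly]
    exact Real.sum_le_exp_of_nonneg zero_le_one (m + 2)
  linarith

lemma expPoly_hasDerivAt (m : ℕ) (x ρ z : ℝ) :
    HasDerivAt (fun w => expPoly (m + 1) ((w - x) * ρ))
      (ρ * expPoly m ((z - x) * ρ)) z := by
  have hu : HasDerivAt (fun w : ℝ => (w - x) * ρ) ρ z := by
    simpa using ((hasDerivAt_id z).sub_const x).mul_const ρ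
  have hterm : ∀ i : ℕ, HasDerivAt (fun w => ((w - x) * ρ) ^ i / (Nat.factorial i))
      ((i : ℝ) * ((z - x) * ρ) ^ (i - 1) * ρ / (Nat.factorial i)) z :=
    fun i => (hu.pow i).div_const _
  have hsum := HasDerivAt.fun_sum (u := Finset.range (m + 2))
    (fun i _ => hterm i)
  have heq : ∑ i ∈ Finset.range (m + 2),
      ((i : ℝ) * ((z - x) * ρ) ^ (i - 1) * ρ / (Nat.factorial i))
      = ρ * expPoly m ((z - x) * ρ) := by
    rw [Finset.sum_range_succ']
    simp only [Nat.cast_zero, zero_mul, Nat.factorial_zero, Nat.cast_one, zero_div, add_zero]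
    rw [expPoly, Finset.mul_sum]
    apply Finset.sum_congr rfl
    intro i _
    have hfact : (Nat.factorial (i + 1) : ℝ) = (i + 1) * (Nat.factorial i) := by
      rw [Nat.factorial_succ]; push_cast; ring
    have hne : ((i : ℝ) + 1) ≠ 0 := by positivity
    have hfne : ((Nat.factorial i : ℝ)) ≠ 0 := by
      exact_mod_cast Nat.factorial_ne_zero i
    simp only [Nat.add_sub_cancel, Nat.cast_add, Nat.cast_one]
    rw [hfact]
    field_simp
  rw [← heq]
  exact hsum

lemma ratio_lemma (M : ℕ → ℝ) (hpos : ∀ j, 0 < M j)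
    (hconv : ∀ j : ℕ, 1 ≤ j → (M j) ^ 2 ≤ M (j - 1) * M (j + 1)) :
    ∀ n k : ℕ, k + 1 ≤ n → M (k + 1) * M (n - 1) ≤ M k * M n := by
  intro n
  induction n with
  | zero => intro k hk; omega
  | succ n IH =>
    intro k hk
    simp only [Nat.add_sub_cancel]
    rcases Nat.lt_or_ge k n with h | h
    · have h1 := IH k (by omega)
      have h2 := hconv n (by omega)
      have p0 := hpos (n - 1)
      have p1 := hpos n
      have p2 := hpos (n + 1)
      have p3 := hpos k
      have p4 := hpos (k + 1)
      nlinarith [mul_le_mul h1 h2 (by positivity) (by positivity), mul_pos p0 p1]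
    · have hkn : k = n := by omega
      subst hkn
      exact le_of_eq (mul_comm _ _)

lemma bang_prop (M : ℕ → ℝ) (hpos : ∀ j, 0 < M j)
    (hRat : ∀ n k : ℕ, k + 1 ≤ n → M (k + 1) * M (n - 1) ≤ M k * M n)
    (f : ℝ → ℝ)
    (hDer : ∀ (k : ℕ), ∀ z ∈ Icc (0:ℝ) 1, HasDerivWithinAt
      (iteratedDerivWithin k f (Icc 0 1)) (iteratedDerivWithin (k + 1) f (Icc 0 1) z)
      (Icc 0 1) z)
    (hCont : ∀ k : ℕ, ContinuousOn (iteratedDerivWithin k f (Icc 0 1)) (Icc (0:ℝ) 1))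
    (hbound : ∀ j : ℕ, ∀ x ∈ Icc (0:ℝ) 1, |iteratedDerivWithin j f (Icc 0 1) x| ≤ M j)
    (n : ℕ) (x y : ℝ) (hx : 0 ≤ x) (hxy : x ≤ y) (hy : y ≤ 1)
    (hP : ∀ d : ℕ, d ≤ n → |iteratedDerivWithin (n - d) f (Icc 0 1) x| ≤
      Real.exp (-(d:ℝ)) * M (n - d)) :
    ∀ d : ℕ, d ≤ n → ∀ z ∈ Icc x y, |iteratedDerivWithin (n - d) f (Icc 0 1) z| ≤
      Real.exp (-(d:ℝ)) * M (n - d) *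
        expPoly d ((z - x) * (Real.exp 1 * M n / M (n - 1))) := by
  set ρ : ℝ := Real.exp 1 * M n / M (n - 1) with hρ
  have hρpos : 0 < ρ := by
    rw [hρ]
    have := hpos n; have := hpos (n - 1)
    positivity
  intro d
  induction d with
  | zero =>
    intro _ z hz
    have hz01 : z ∈ Icc (0:ℝ) 1 := ⟨le_trans hx hz.1, le_trans hz.2 hy⟩
    have := hbound n z hz01
    simp only [Nat.sub_zero, Nat.cast_zero, neg_zero, Real.exp_zero, one_mul, expPoly_zero]
    simpa using this
  | succ d IH =>
    intro hd1 z hz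
    have hdn : d ≤ n := by omega
    have hk : n - (d + 1) + 1 = n - d := by omega
    set k := n - (d + 1) with hkdef
    set C : ℝ := Real.exp (-((d:ℝ) + 1)) * M k with hC
    have hCpos : 0 < C := by
      have := hpos k
      rw [hC]; positivity
    have harg1 : ContinuousOn (iteratedDerivWithin k f (Icc 0 1)) (Icc x y) :=
      (hCont k).mono (fun w hw => ⟨le_trans hx hw.1, le_trans hw.2 hy⟩)
    have harg2 : ∀ w ∈ Ico x y, HasDerivWithinAt (iteratedDerivWithin k f (Icc 0 1))
        (iteratedDerivWithin (n - d) f (Icc 0 1) w) (Ici w) w := by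
      intro w hw
      have hw01 : w ∈ Icc (0:ℝ) 1 := ⟨le_trans hx hw.1, le_trans hw.2.le hy⟩
      have H := hDer k w hw01
      rw [hk] at H
      apply H.mono_of_mem_nhdsWithin
      exact Filter.mem_of_superset
        (Icc_mem_nhdsGE_of_mem ⟨hw01.1, lt_of_lt_of_le hw.2 hy⟩) (fun a ha => ha)
    have harg3 : ‖iteratedDerivWithin k f (Icc 0 1) x‖ ≤
        C * expPoly (d + 1) ((x - x) * ρ) := by
      rw [Real.norm_eq_abs]
      have := hP (d + 1) hd1
      simp only [sub_self, zero_mul, expPoly_at_zero, mul_one]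
      convert this using 2
      push_cast; ring
    have harg4 : ∀ w : ℝ, HasDerivAt (fun w => C * expPoly (d + 1) ((w - x) * ρ))
        (C * (ρ * expPoly d ((w - x) * ρ))) w :=
      fun w => (expPoly_hasDerivAt d x ρ w).const_mul C
    have harg5 : ∀ w ∈ Ico x y, ‖iteratedDerivWithin (n - d) f (Icc 0 1) w‖ ≤
        C * (ρ * expPoly d ((w - x) * ρ)) := by
      intro w hw
      have hwIcc : w ∈ Icc x y := ⟨hw.1, hw.2.le⟩
      have hIH := IH hdn w hwIcc
      rw [Real.norm_eq_abs]
      have hEnn : 0 ≤ expPoly d ((w - x) * ρ) :=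
        expPoly_nonneg d (by nlinarith [hw.1, hρpos])
      have hMn1 : 0 < M (n - 1) := hpos _
      have key : Real.exp (-(d:ℝ)) * M (n - d) ≤ C * ρ := by
        have h1 : M (n - d) * M (n - 1) ≤ M k * M n := by
          have := hRat n k (by omega)
          rwa [hk] at this
        have hexp : Real.exp (-((d:ℝ) + 1)) * Real.exp 1 = Real.exp (-(d:ℝ)) := by
          rw [← Real.exp_add]; ring_nf
        have hCρ : C * ρ = Real.exp (-(d:ℝ)) * (M k * M n) / M (n - 1) := by
          rw [hC, hρ, ← hexp]; ring
        rw [hCρ, le_div_iff₀ hMn1]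
        nlinarith [Real.exp_pos (-(d:ℝ))]
      calc |iteratedDerivWithin (n - d) f (Icc 0 1) w|
          ≤ Real.exp (-(d:ℝ)) * M (n - d) * expPoly d ((w - x) * ρ) := hIH
        _ ≤ (C * ρ) * expPoly d ((w - x) * ρ) :=
            mul_le_mul_of_nonneg_right key hEnn
        _ = C * (ρ * expPoly d ((w - x) * ρ)) := by ring
    have main : ∀ w ∈ Icc x y, ‖iteratedDerivWithin k f (Icc 0 1) w‖ ≤
        C * expPoly (d + 1) ((w - x) * ρ) := fun w hw =>
      image_norm_le_of_norm_deriv_right_le_deriv_boundary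
        (B := fun w => C * expPoly (d + 1) ((w - x) * ρ))
        harg1 harg2 harg3 harg4 harg5 hw
    have := main z hz
    rw [Real.norm_eq_abs] at this
    calc |iteratedDerivWithin (n - (d + 1)) f (Icc 0 1) z|
        ≤ C * expPoly (d + 1) ((z - x) * ρ) := this
      _ = Real.exp (-((d + 1 : ℕ) : ℝ)) * M (n - (d + 1)) *
            expPoly (d + 1) ((z - x) * ρ) := by
          rw [hC, hkdef]; push_cast; ring

theorem flat_point_upper_bound (M : ℕ → ℝ) (hpos : ∀ j, 0 < M j)
    (hM0 : M 0 = 1) (hconv : ∀ j : ℕ, 1 ≤ j → (M j) ^ 2 ≤ M (j - 1) * M (j + 1))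
    (f : ℝ → ℝ) (hf : ContDiffOn ℝ (⊤ : ℕ∞) f (Icc 0 1))
    (hbound : ∀ j : ℕ, ∀ x ∈ Icc (0:ℝ) 1, |iteratedDerivWithin j f (Icc 0 1) x| ≤ M j)
    (hzero : ∀ j : ℕ, iteratedDerivWithin j f (Icc 0 1) 0 = 0)
    (c : ℝ) (hc : c ∈ Ioc (0:ℝ) 1)
    (𝔐 : ℝ) (h𝔐 : 𝔐 = sSup ((fun x => |f x|) '' Icc 0 c)) (h𝔐pos : 0 < 𝔐) :
    ∀ N : ℕ, ∑ j ∈ Finset.Icc (⌈Real.log 𝔐⁻¹⌉₊ + 1) N, M (j - 1) / M j <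
      Real.exp 1 * c := by
  intro N
  obtain ⟨hc0, hc1⟩ := hc
  set n0 := ⌈Real.log 𝔐⁻¹⌉₊ with hn0def
  by_contra hcon
  push_neg at hcon
  have epos : (0:ℝ) < Real.exp 1 := Real.exp_pos 1
  have hud : UniqueDiffOn ℝ (Icc (0:ℝ) 1) := uniqueDiffOn_Icc one_pos
  have hDiff : ∀ k : ℕ, DifferentiableOn ℝ (iteratedDerivWithin k f (Icc 0 1)) (Icc (0:ℝ) 1) :=
    fun k => hf.differentiableOn_iteratedDerivWithin (by exact_mod_cast ENat.coe_lt_top k) hud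
  have hDer : ∀ (k : ℕ), ∀ z ∈ Icc (0:ℝ) 1, HasDerivWithinAt
      (iteratedDerivWithin k f (Icc 0 1)) (iteratedDerivWithin (k + 1) f (Icc 0 1) z)
      (Icc 0 1) z := by
    intro k z hz
    have h := (hDiff k z hz).hasDerivWithinAt
    rwa [← iteratedDerivWithin_succ] at h
  have hCont : ∀ k : ℕ, ContinuousOn (iteratedDerivWithin k f (Icc 0 1)) (Icc (0:ℝ) 1) :=
    fun k => (hDiff k).continuousOn
  have hRat := ratio_lemma M hpos hconv
  -- the main inductive claim
  have Q : ∀ m n : ℕ, n ≤ N → N - n ≤ m → ∀ x : ℝ, 0 ≤ x → x ≤ c →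
      x * Real.exp 1 ≤ ∑ j ∈ Finset.Icc (n + 1) N, M (j - 1) / M j →
      ∀ d : ℕ, d ≤ n → |iteratedDerivWithin (n - d) f (Icc 0 1) x| ≤
        Real.exp (-(d:ℝ)) * M (n - d) := by
    intro m
    induction m with
    | zero =>
      intro n hnN hm x hx0 hxc hxsum d hdn
      have hn : n = N := by omega
      have hempty : Finset.Icc (n + 1) N = ∅ := Finset.Icc_eq_empty (by omega)
      rw [hempty, Finset.sum_empty] at hxsum
      have hx0' : x = 0 := le_antisymm (by nlinarith) hx0
      subst hx0'
      rw [hzero (n - d), abs_zero]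
      have := hpos (n - d)
      positivity
    | succ m IHm =>
      intro n hnN hm x hx0 hxc hxsum d hdn
      rcases Nat.eq_or_lt_of_le hnN with hn | hn
      · have hempty : Finset.Icc (n + 1) N = ∅ := Finset.Icc_eq_empty (by omega)
        rw [hempty, Finset.sum_empty] at hxsum
        have hx0' : x = 0 := le_antisymm (by nlinarith) hx0
        subst hx0'
        rw [hzero (n - d), abs_zero]
        have := hpos (n - d)
        positivity
      · -- n < N
        have hn1N : n + 1 ≤ N := hn
        set δ : ℝ := M n / (Real.exp 1 * M (n + 1)) with hδdef
        have hδpos : 0 < δ := by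
          have := hpos n; have := hpos (n + 1)
          rw [hδdef]; positivity
        set x' : ℝ := max 0 (x - δ) with hx'def
        have hx'0 : 0 ≤ x' := le_max_left _ _
        have hx'x : x' ≤ x := max_le hx0 (by linarith)
        have hxx' : x - x' ≤ δ := by
          rw [hx'def]
          rcases le_max_iff.2 (Or.inl (le_refl (0:ℝ))) with _
          have := le_max_right (0:ℝ) (x - δ)
          linarith
        have hsplit : ∑ j ∈ Finset.Icc (n + 1) N, M (j - 1) / M j
            = M n / M (n + 1) + ∑ j ∈ Finset.Icc (n + 2) N, M (j - 1) / M j := by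
          have h1 : Finset.Icc (n + 2) N = Finset.Ioc (n + 1) N :=
            Finset.Icc_add_one_left_eq_Ioc _ _
          have h2 : insert (n + 1) (Finset.Ioc (n + 1) N) = Finset.Icc (n + 1) N :=
            Finset.Ioc_insert_left hn1N
          rw [h1, ← h2, Finset.sum_insert (by simp)]
          simp
        have hsum' : x' * Real.exp 1 ≤ ∑ j ∈ Finset.Icc (n + 2) N, M (j - 1) / M j := by
          have hnn : (0:ℝ) ≤ ∑ j ∈ Finset.Icc (n + 2) N, M (j - 1) / M j :=
            Finset.sum_nonneg fun j _ => le_of_lt (by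
              have := hpos (j - 1); have := hpos j; positivity)
          rcases max_cases (0:ℝ) (x - δ) with ⟨h, _⟩ | ⟨h, _⟩
          · rw [hx'def, h]; simpa using hnn
          · rw [hx'def, h]
            have hδe : δ * Real.exp 1 = M n / M (n + 1) := by
              rw [hδdef]
              have := (hpos (n + 1)).ne'
              field_simp
            rw [hsplit] at hxsum
            nlinarith
        have hP' : ∀ d' : ℕ, d' ≤ n + 1 →
            |iteratedDerivWithin (n + 1 - d') f (Icc 0 1) x'| ≤
              Real.exp (-(d':ℝ)) * M (n + 1 - d') :=
          IHm (n + 1) hn1N (by omega) x' hx'0 (le_trans hx'x hxc)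
            (by rwa [hx'def] at hsum' ⊢) 
        -- propagate from x' to x
        have hprop := bang_prop M hpos hRat f hDer hCont hbound (n + 1) x' x
          hx'0 hx'x (le_trans hxc hc1) hP'
        have hρeq : Real.exp 1 * M (n + 1) / M (n + 1 - 1) = Real.exp 1 * M (n + 1) / M n := by
          norm_num
        have hres := hprop (d + 1) (by omega) x ⟨hx'x, le_refl x⟩
        have harg0 : 0 ≤ (x - x') * (Real.exp 1 * M (n + 1) / M (n + 1 - 1)) := by
          have := hpos (n + 1); have := hpos (n + 1 - 1)
          have h1 : 0 ≤ x - x' := by linarith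
          positivity
        have harg1 : (x - x') * (Real.exp 1 * M (n + 1) / M (n + 1 - 1)) ≤ 1 := by
          rw [hρeq]
          have hMn : 0 < M n := hpos n
          have hMn1 : 0 < M (n + 1) := hpos (n + 1)
          have hδρ : δ * (Real.exp 1 * M (n + 1) / M n) = 1 := by
            rw [hδdef]; field_simp
          calc (x - x') * (Real.exp 1 * M (n + 1) / M n)
              ≤ δ * (Real.exp 1 * M (n + 1) / M n) := by
                apply mul_le_mul_of_nonneg_right hxx'
                positivity
            _ = 1 := hδρ
        have hEle : expPoly (d + 1) ((x - x') * (Real.exp 1 * M (n + 1) / M (n + 1 - 1)))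
            ≤ Real.exp 1 := by
          calc expPoly (d + 1) ((x - x') * (Real.exp 1 * M (n + 1) / M (n + 1 - 1)))
              ≤ expPoly (d + 1) 1 := expPoly_mono _ harg0 harg1
            _ ≤ Real.exp 1 := (expPoly_one_lt _).le
        have hkey : n + 1 - (d + 1) = n - d := by omega
        rw [hkey] at hres
        have hexp : Real.exp (-((d:ℝ) + 1)) * Real.exp 1 = Real.exp (-(d:ℝ)) := by
          rw [← Real.exp_add]; ring_nf
        have hMpos : 0 < M (n - d) := hpos _
        calc |iteratedDerivWithin (n - d) f (Icc 0 1) x|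
            ≤ Real.exp (-((d + 1 : ℕ):ℝ)) * M (n - d) *
                expPoly (d + 1) ((x - x') * (Real.exp 1 * M (n + 1) / M (n + 1 - 1))) := hres
          _ ≤ Real.exp (-((d + 1 : ℕ):ℝ)) * M (n - d) * Real.exp 1 := by
              apply mul_le_mul_of_nonneg_left hEle
              positivity
          _ = Real.exp (-(d:ℝ)) * M (n - d) := by
              push_cast
              rw [show Real.exp (-((d:ℝ) + 1)) * M (n - d) * Real.exp 1
                  = Real.exp (-((d:ℝ) + 1)) * Real.exp 1 * M (n - d) by ring, hexp]
  -- find the maximum point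
  have hsub : Icc (0:ℝ) c ⊆ Icc (0:ℝ) 1 := Icc_subset_Icc le_rfl hc1
  have hfc : ContinuousOn (fun z => |f z|) (Icc (0:ℝ) c) :=
    (hf.continuousOn.mono hsub).abs
  obtain ⟨xs, hxs, hmax⟩ := isCompact_Icc.exists_isMaxOn (nonempty_Icc.2 hc0.le) hfc
  have h𝔐eq : 𝔐 = |f xs| := by
    rw [h𝔐]
    apply IsGreatest.csSup_eq
    constructor
    · exact ⟨xs, hxs, rfl⟩
    · rintro y ⟨z, hz, rfl⟩
      exact hmax hz
  have hn0N : n0 + 1 ≤ N := by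
    by_contra h
    have hempty : Finset.Icc (n0 + 1) N = ∅ := Finset.Icc_eq_empty (by omega)
    rw [hempty, Finset.sum_empty] at hcon
    nlinarith
  -- now run the argument at level n0 + 1 with y = xs
  set δ : ℝ := M n0 / (Real.exp 1 * M (n0 + 1)) with hδdef
  have hδpos : 0 < δ := by
    have := hpos n0; have := hpos (n0 + 1)
    rw [hδdef]; positivity
  set x' : ℝ := max 0 (xs - δ) with hx'def
  have hxs0 : 0 ≤ xs := hxs.1
  have hxsc : xs ≤ c := hxs.2
  have hx'0 : 0 ≤ x' := le_max_left _ _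
  have hx'x : x' ≤ xs := max_le hxs0 (by linarith)
  have hxx' : xs - x' ≤ δ := by
    have := le_max_right (0:ℝ) (xs - δ)
    rw [hx'def]
    linarith
  have hxs_sum : xs * Real.exp 1 ≤ ∑ j ∈ Finset.Icc (n0 + 1) N, M (j - 1) / M j := by
    calc xs * Real.exp 1 ≤ c * Real.exp 1 := by nlinarith
      _ = Real.exp 1 * c := mul_comm _ _
      _ ≤ _ := hcon
  have hsplit : ∑ j ∈ Finset.Icc (n0 + 1) N, M (j - 1) / M j
      = M n0 / M (n0 + 1) + ∑ j ∈ Finset.Icc (n0 + 2) N, M (j - 1) / M j := by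
    have h1 : Finset.Icc (n0 + 2) N = Finset.Ioc (n0 + 1) N :=
      Finset.Icc_add_one_left_eq_Ioc _ _
    have h2 : insert (n0 + 1) (Finset.Ioc (n0 + 1) N) = Finset.Icc (n0 + 1) N :=
      Finset.Ioc_insert_left hn0N
    rw [h1, ← h2, Finset.sum_insert (by simp)]
    simp
  have hsum' : x' * Real.exp 1 ≤ ∑ j ∈ Finset.Icc (n0 + 2) N, M (j - 1) / M j := by
    have hnn : (0:ℝ) ≤ ∑ j ∈ Finset.Icc (n0 + 2) N, M (j - 1) / M j :=
      Finset.sum_nonneg fun j _ => le_of_lt (by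
        have := hpos (j - 1); have := hpos j; positivity)
    rcases max_cases (0:ℝ) (xs - δ) with ⟨h, _⟩ | ⟨h, _⟩
    · rw [hx'def, h]; simpa using hnn
    · rw [hx'def, h]
      have hδe : δ * Real.exp 1 = M n0 / M (n0 + 1) := by
        rw [hδdef]
        have := (hpos (n0 + 1)).ne'
        field_simp
      rw [hsplit] at hxs_sum
      nlinarith
  have hP' : ∀ d' : ℕ, d' ≤ n0 + 1 →
      |iteratedDerivWithin (n0 + 1 - d') f (Icc 0 1) x'| ≤
        Real.exp (-(d':ℝ)) * M (n0 + 1 - d') :=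
    Q N (n0 + 1) hn0N (by omega) x' hx'0 (le_trans hx'x hxsc) (by rwa [hx'def] at hsum' ⊢)
  have hprop := bang_prop M hpos hRat f hDer hCont hbound (n0 + 1) x' xs
    hx'0 hx'x (le_trans hxsc hc1) hP'
  have hres := hprop (n0 + 1) le_rfl xs ⟨hx'x, le_refl xs⟩
  have harg0 : 0 ≤ (xs - x') * (Real.exp 1 * M (n0 + 1) / M (n0 + 1 - 1)) := by
    have := hpos (n0 + 1); have := hpos (n0 + 1 - 1)
    have h1 : 0 ≤ xs - x' := by linarith
    positivity
  have harg1 : (xs - x') * (Real.exp 1 * M (n0 + 1) / M (n0 + 1 - 1)) ≤ 1 := by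
    have hρeq : Real.exp 1 * M (n0 + 1) / M (n0 + 1 - 1)
        = Real.exp 1 * M (n0 + 1) / M n0 := by norm_num
    rw [hρeq]
    have hMn : 0 < M n0 := hpos n0
    have hMn1 : 0 < M (n0 + 1) := hpos (n0 + 1)
    have hδρ : δ * (Real.exp 1 * M (n0 + 1) / M n0) = 1 := by
      rw [hδdef]; field_simp
    calc (xs - x') * (Real.exp 1 * M (n0 + 1) / M n0)
        ≤ δ * (Real.exp 1 * M (n0 + 1) / M n0) := by
          apply mul_le_mul_of_nonneg_right hxx'
          positivity
      _ = 1 := hδρ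
  have hElt : expPoly (n0 + 1) ((xs - x') * (Real.exp 1 * M (n0 + 1) / M (n0 + 1 - 1)))
      < Real.exp 1 :=
    lt_of_le_of_lt (expPoly_mono _ harg0 harg1) (expPoly_one_lt _)
  have hkey : n0 + 1 - (n0 + 1) = 0 := by omega
  rw [hkey, iteratedDerivWithin_zero, hM0] at hres
  have hexp : Real.exp (-((n0:ℝ) + 1)) * Real.exp 1 = Real.exp (-(n0:ℝ)) := by
    rw [← Real.exp_add]; ring_nf
  have hlt : |f xs| < Real.exp (-(n0:ℝ)) := by
    have h1 : Real.exp (-((n0 + 1 : ℕ):ℝ)) * 1 *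
        expPoly (n0 + 1) ((xs - x') * (Real.exp 1 * M (n0 + 1) / M (n0 + 1 - 1)))
        < Real.exp (-((n0 + 1 : ℕ):ℝ)) * 1 * Real.exp 1 := by
      apply mul_lt_mul_of_pos_left hElt
      positivity
    have h2 : Real.exp (-((n0 + 1 : ℕ):ℝ)) * 1 * Real.exp 1 = Real.exp (-(n0:ℝ)) := by
      push_cast
      rw [mul_one, hexp]
    calc |f xs| ≤ _ := hres
      _ < _ := h1
      _ = _ := h2
  have hexpM : Real.exp (-(n0:ℝ)) ≤ 𝔐 := by
    have hlog : Real.log 𝔐⁻¹ ≤ (n0:ℝ) := Nat.le_ceil _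
    have h1 : 𝔐⁻¹ ≤ Real.exp (n0:ℝ) := by
      calc 𝔐⁻¹ = Real.exp (Real.log 𝔐⁻¹) := (Real.exp_log (inv_pos.2 h𝔐pos)).symm
        _ ≤ Real.exp (n0:ℝ) := Real.exp_le_exp.2 hlog
    rw [Real.exp_neg]
    calc (Real.exp (n0:ℝ))⁻¹ ≤ (𝔐⁻¹)⁻¹ :=
          inv_anti₀ (inv_pos.2 h𝔐pos) h1
      _ = 𝔐 := inv_inv 𝔐
  rw [← h𝔐eq] at hlt
  linarith
end

section
/- (Markov-type inequality) For any real polynomial S of degree at most d and any k ∈ ℕ, |S^{(k)}(0)| ≤ d^k · sup_{x ∈ [-1,1]} |S(x)|. -/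
open Set Polynomial Finset Real


noncomputable def Cheb : ℕ → Polynomial ℝ
  | 0 => 1
  | 1 => Polynomial.X
  | (n+2) => 2 * Polynomial.X * Cheb (n+1) - Cheb n

lemma Cheb_zero : Cheb 0 = 1 := rfl
lemma Cheb_one : Cheb 1 = X := rfl
lemma Cheb_add_two (n : ℕ) : Cheb (n+2) = 2 * X * Cheb (n+1) - Cheb n := rfl

lemma Cheb_natDegree_le (n : ℕ) : (Cheb n).natDegree ≤ n := by
  induction n using Nat.strong_induction_on with
  | _ n ih =>
    match n with
    | 0 => simp [Cheb_zero]
    | 1 => simp [Cheb_one, natDegree_X_le]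
    | (n+2) =>
      rw [Cheb_add_two]
      refine le_trans (natDegree_sub_le _ _) (max_le ?_ ?_)
      · refine le_trans (natDegree_mul_le) ?_
        have h1 : (2 * X : Polynomial ℝ).natDegree ≤ 1 := by
          refine le_trans (natDegree_mul_le) ?_
          simp [natDegree_X_le]
        have := ih (n+1) (by omega)
        omega
      · exact le_trans (ih n (by omega)) (by omega)

lemma binom_aux (a : ℝ) (ha : 1 ≤ a) (k : ℕ) (hk : 1 ≤ k) :
    2*k*a^(k-1) + (a-1)^k ≤ (a+1)^k := by
  have h1 : (a+1)^k = ∑ i ∈ range (k+1), a^i * 1^(k-i) * (k.choose i) := add_pow a 1 k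
  have h2 : (a-1)^k = ∑ i ∈ range (k+1), a^i * (-1)^(k-i) * (k.choose i) := by
    rw [show a - 1 = a + (-1) by ring]; exact add_pow a (-1) k
  have key : (a+1)^k - (a-1)^k = 
      ∑ i ∈ range (k+1), a^i * ((1:ℝ) - (-1)^(k-i)) * (k.choose i) := by
    rw [h1, h2, ← Finset.sum_sub_distrib]; congr 1; ext i; ring
  have hterm : a^(k-1) * ((1:ℝ) - (-1)^(k-(k-1))) * (k.choose (k-1)) 
      ≤ ∑ i ∈ range (k+1), a^i * ((1:ℝ) - (-1)^(k-i)) * (k.choose i) := by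
    apply Finset.single_le_sum (f := fun i => a^i * ((1:ℝ) - (-1)^(k-i)) * (k.choose i))
    · intro i _
      have h3 : (0:ℝ) ≤ a^i := pow_nonneg (by linarith) i
      have h4 : (0:ℝ) ≤ (1:ℝ) - (-1)^(k-i) := by
        rcases Nat.even_or_odd (k-i) with he | ho
        · rw [he.neg_one_pow]; norm_num
        · rw [ho.neg_one_pow]; norm_num
      positivity
    · exact Finset.mem_range.mpr (by omega)
  have e1 : k - (k-1) = 1 := by omega
  have e2 : k.choose (k-1) = k := by
    have := Nat.choose_symm (Nat.sub_le k 1)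
    rw [e1, Nat.choose_one_right] at this
    omega
  rw [e1, e2] at hterm
  simp only [pow_one] at hterm
  linarith [hterm, key]

lemma Cheb_coeff_fact : ∀ n k m : ℕ, n = k + 2*m →
    0 ≤ (-1:ℝ)^m * (Cheb n).coeff k ∧ 
    (k.factorial : ℝ) * ((-1:ℝ)^m * (Cheb n).coeff k) ≤ (n:ℝ)^k := by
  intro n
  induction n using Nat.strong_induction_on with
  | _ n ih =>
    match n with
    | 0 => 
      intro k m h
      obtain ⟨rfl, rfl⟩ : k = 0 ∧ m = 0 := by omega
      simp [Cheb_zero]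
    | 1 =>
      intro k m h
      obtain ⟨rfl, rfl⟩ : k = 1 ∧ m = 0 := by omega
      simp [Cheb_one, Nat.factorial]
    | (n'+2) =>
      intro k m h
      have hre : (Cheb (n'+2)).coeff k = 2 * (X * Cheb (n'+1)).coeff k - (Cheb n').coeff k := by
        rw [Cheb_add_two]
        rw [show (2 : ℝ[X]) * X * Cheb (n'+1) = 2 * (X * Cheb (n'+1)) by ring]
        rw [coeff_sub, coeff_ofNat_mul]
      match k with
      | 0 =>
        have hm : m = (m-1) + 1 := by omega
        have IH := ih n' (by omega) 0 (m-1) (by omega)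
        rw [hre, coeff_X_mul_zero]
        constructor
        · rw [hm, pow_succ]
          nlinarith [IH.1]
        · rw [hm, pow_succ]
          simp only [Nat.factorial_zero, Nat.cast_one, one_mul, pow_zero] at *
          nlinarith [IH.2, IH.1]
      | (k'+1) =>
        rw [hre, coeff_X_mul]
        have IH1 := ih (n'+1) (by omega) k' m (by omega)
        have ha : (1:ℝ) ≤ ((n'+1 : ℕ) : ℝ) := by push_cast; linarith [Nat.cast_nonneg (α := ℝ) n']
        have hbin := binom_aux ((n'+1 : ℕ) : ℝ) ha (k'+1) (by omega)
        have hfs : ((k'+1).factorial : ℝ) = (k'+1) * (k'.factorial : ℝ) := by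
          rw [Nat.factorial_succ]; push_cast; ring
        have hred : (k'+1)-1 = k' := by omega
        rw [hred] at hbin
        have hcast1 : ((n'+1:ℕ):ℝ) + 1 = ((n'+2:ℕ):ℝ) := by push_cast; ring
        have hcast2 : ((n'+1:ℕ):ℝ) - 1 = ((n':ℕ):ℝ) := by push_cast; ring
        rw [hcast1, hcast2] at hbin
        match m with
        | 0 =>
          have ht2 : (Cheb n').coeff (k'+1) = 0 := by
            apply coeff_eq_zero_of_natDegree_lt
            exact lt_of_le_of_lt (Cheb_natDegree_le n') (by omega)
          rw [ht2]
          simp only [pow_zero, one_mul] at *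
          have h1 := IH1.1
          have h2 := IH1.2
          constructor
          · linarith
          · rw [hfs]
            have hpow : (0:ℝ) ≤ ((n':ℕ):ℝ)^(k'+1) := by positivity
            have hmul := mul_le_mul_of_nonneg_left h2 (by positivity : (0:ℝ) ≤ 2*((k':ℝ)+1))
            have hgeq : ((k':ℝ)+1) * (k'.factorial:ℝ) * (2 * (Cheb (n'+1)).coeff k' - 0)
                = 2*((k':ℝ)+1) * ((k'.factorial:ℝ) * (Cheb (n'+1)).coeff k') := by ring
            rw [hgeq]
            push_cast at hbin hmul ⊢
            linarith [hmul, hbin, hpow]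
        | (m''+1) =>
          have IH2 := ih n' (by omega) (k'+1) m'' (by omega)
          have h1 := IH1.1; have h2 := IH1.2
          have h3 := IH2.1; have h4 := IH2.2
          have hsgn : ((-1:ℝ))^(m''+1) = -((-1:ℝ))^m'' := by rw [pow_succ]; ring
          constructor
          · rw [hsgn] at h1 ⊢
            nlinarith [h1, h3]
          · rw [hsgn] at h1 h2 ⊢
            rw [hfs]
            rw [hfs] at h4
            have hmul := mul_le_mul_of_nonneg_left h2 (by positivity : (0:ℝ) ≤ 2*((k':ℝ)+1))
            have hgeq : ((k':ℝ)+1) * (k'.factorial:ℝ) * (-(-1:ℝ)^m'' * (2 * (Cheb (n'+1)).coeff k' - (Cheb n').coeff (k'+1)))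
                = 2*((k':ℝ)+1) * ((k'.factorial:ℝ) * (-(-1:ℝ)^m'' * (Cheb (n'+1)).coeff k'))
                  + ((k':ℝ)+1) * (k'.factorial:ℝ) * ((-1:ℝ)^m'' * (Cheb n').coeff (k'+1)) := by ring
            rw [hgeq]
            push_cast at hbin h4 hmul ⊢
            linarith [hmul, hbin, h4]

lemma Cheb_eval_cos (n : ℕ) (θ : ℝ) : (Cheb n).eval (Real.cos θ) = Real.cos (n * θ) := by
  induction n using Nat.strong_induction_on with
  | _ n ih =>
    match n with
    | 0 => simp [Cheb_zero]
    | 1 => simp [Cheb_one]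
    | (n+2) =>
      rw [Cheb_add_two]
      have h1 := ih (n+1) (by omega) 
      have h0 := ih n (by omega)
      simp only [eval_sub, eval_mul, eval_ofNat, eval_X, h1, h0]
      have key : Real.cos ((n+1 : ℕ) * θ + θ) + Real.cos ((n+1 : ℕ) * θ - θ) 
          = 2 * Real.cos ((n+1:ℕ) * θ) * Real.cos θ := by
        rw [Real.cos_add, Real.cos_sub]; ring
      have e1 : ((n+2 : ℕ) : ℝ) * θ = ((n+1 : ℕ):ℝ) * θ + θ := by push_cast; ring
      have e0 : ((n : ℕ) : ℝ) * θ = ((n+1 : ℕ):ℝ) * θ - θ := by push_cast; ring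
      rw [e1, e0] at *
      linarith [key]

lemma esymm_nonneg (s : Multiset ℝ) (hs : ∀ x ∈ s, (0:ℝ) ≤ x) (n : ℕ) : 0 ≤ s.esymm n := by
  unfold Multiset.esymm
  apply Multiset.sum_nonneg
  intro x hx
  rw [Multiset.mem_map] at hx
  obtain ⟨t, ht, rfl⟩ := hx
  have hle := (Multiset.mem_powersetCard.1 ht).1
  exact Multiset.prod_nonneg (fun y hy => hs y (Multiset.mem_of_le hle hy))

lemma coeff_prod_X_sub_C_sign (s : Finset ℕ) (w : ℕ → ℝ) (hw : ∀ j ∈ s, 0 ≤ w j) (r : ℕ)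
    (hr : r ≤ s.card) :
    0 ≤ (-1:ℝ)^(s.card - r) * (∏ j ∈ s, (X - C (w j))).coeff r := by
  have h1 : (∏ j ∈ s, (X - C (w j))) = ((s.val.map w).map (fun t => X - C t)).prod := by
    rw [Multiset.map_map]
    rfl
  have hcard : Multiset.card (s.val.map w) = s.card := by simp
  have h2 := Multiset.prod_X_sub_C_coeff (s.val.map w) (k := r) (by rw [hcard]; exact hr)
  rw [h1, h2, hcard]
  rw [← mul_assoc, ← pow_add]
  have hev : Even ((s.card - r) + (s.card - r)) := Even.add_self _
  rw [hev.neg_one_pow, one_mul]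
  apply esymm_nonneg
  intro x hx
  rw [Multiset.mem_map] at hx
  obtain ⟨j, hj, rfl⟩ := hx
  exact hw j hj

lemma key (δ k e : ℕ) (hk1 : 1 ≤ k) (he : δ = k + 2*e) (Tp : Polynomial ℝ)
    (hdeg : Tp.natDegree ≤ δ) (M : ℝ)
    (hval : ∀ x ∈ Icc (-1:ℝ) 1, |Tp.eval x| ≤ M) :
    (k.factorial : ℝ) * |Tp.coeff k| ≤ (δ:ℝ)^k * M := by
  classical
  have hδ1 : 1 ≤ δ := by omega
  have hδR : (0:ℝ) < (δ:ℝ) := by exact_mod_cast hδ1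
  set v : ℕ → ℝ := fun j => Real.cos (j * π / δ) with hvdef
  set u : ℕ → ℝ := fun j => (v j)^2 with hudef
  have hvmono : ∀ i j : ℕ, i < j → j ≤ δ → v j < v i := by
    intro i j hij hj
    apply Real.cos_lt_cos_of_nonneg_of_le_pi
    · positivity
    · rw [div_le_iff₀ hδR]
      have : (j:ℝ) ≤ δ := by exact_mod_cast hj
      nlinarith [Real.pi_pos]
    · have h1 : (i:ℝ) < j := by exact_mod_cast hij
      have hpi := Real.pi_pos
      rw [div_lt_div_iff₀ hδR hδR]
      nlinarith [mul_lt_mul_of_pos_right (mul_lt_mul_of_pos_right h1 hpi) hδR]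
  have hvIcc : ∀ i : ℕ, v i ∈ Icc (-1:ℝ) 1 := by
    intro i
    exact ⟨Real.neg_one_le_cos _, Real.cos_le_one _⟩
  have hinj : Set.InjOn v (↑(Finset.range (δ+1)) : Set ℕ) := by
    intro a ha b hb hab
    simp only [Finset.coe_range, Set.mem_Iio] at ha hb
    by_contra hne
    rcases lt_or_gt_of_ne hne with h | h
    · exact absurd hab (ne_of_gt (hvmono a b h (by omega)))
    · exact absurd hab (ne_of_lt (hvmono b a h (by omega)))
  have hdeglt : ∀ (f : Polynomial ℝ), f.natDegree ≤ δ → f.degree < (#(range (δ+1)) : ℕ) := by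
    intro f hf
    rw [Finset.card_range]
    rcases eq_or_ne f 0 with rfl | hne
    · rw [degree_zero]
      exact_mod_cast WithBot.bot_lt_coe (δ+1 : ℕ)
    · exact (natDegree_lt_iff_degree_lt hne).mp (by omega)
  set b : ℕ → ℝ := fun i => (Lagrange.basis (range (δ+1)) v i).coeff k with hbdef
  set D : ℕ → ℝ := fun i => ∏ j ∈ (range (δ+1)).erase i, (v i - v j) with hDdef
  set N : ℕ → ℝ := fun i => (∏ j ∈ (range (δ+1)).erase i, (X - C (v j))).coeff k with hNdef
  have hbeq : ∀ i, b i = (D i)⁻¹ * N i := by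
    intro i
    simp only [hbdef, hDdef, hNdef]
    unfold Lagrange.basis Lagrange.basisDivisor
    rw [Finset.prod_mul_distrib, ← map_prod, coeff_C_mul, Finset.prod_inv_distrib]
  have herase : ∀ i, i ≤ δ → (range (δ+1)).erase i = range i ∪ Ico (i+1) (δ+1) := by
    intro i hi
    ext j
    simp only [Finset.mem_erase, Finset.mem_range, Finset.mem_union, Finset.mem_Ico]
    omega
  have hD : ∀ i, i ≤ δ → 0 < (-1:ℝ)^i * D i := by
    intro i hi
    have hdisj : Disjoint (range i) (Ico (i+1) (δ+1)) := by
      rw [Finset.disjoint_left]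
      intro a ha hb
      simp only [Finset.mem_range] at ha
      simp only [Finset.mem_Ico] at hb
      omega
    simp only [hDdef]
    rw [herase i hi, Finset.prod_union hdisj]
    have hre : ∀ j ∈ range i, (v i - v j) = (-1) * (v j - v i) := by
      intro j _; ring
    rw [Finset.prod_congr rfl hre, Finset.prod_mul_distrib, Finset.prod_const, Finset.card_range]
    have h11 : (-1:ℝ)^i * (-1:ℝ)^i = 1 := by
      rw [← pow_add]; exact (Even.add_self i).neg_one_pow
    have hP1 : 0 < ∏ j ∈ range i, (v j - v i) := by
      apply Finset.prod_pos
      intro j hj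
      simp only [Finset.mem_range] at hj
      have := hvmono j i hj hi
      linarith
    have hP2 : 0 < ∏ j ∈ Ico (i+1) (δ+1), (v i - v j) := by
      apply Finset.prod_pos
      intro j hj
      simp only [Finset.mem_Ico] at hj
      have := hvmono i j (by omega) (by omega)
      linarith
    calc (0:ℝ) < (∏ j ∈ range i, (v j - v i)) * ∏ j ∈ Ico (i+1) (δ+1), (v i - v j) := by
          exact mul_pos hP1 hP2
    _ = (-1:ℝ)^i * ((-1:ℝ)^i * (∏ j ∈ range i, (v j - v i)) * ∏ j ∈ Ico (i+1) (δ+1), (v i - v j)) := by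
          rw [show ∀ A B : ℝ, (-1:ℝ)^i * ((-1:ℝ)^i * A * B) = ((-1:ℝ)^i * (-1:ℝ)^i) * (A * B) from by intros; ring, h11, one_mul]
  have hTpc : Tp.coeff k = ∑ i ∈ range (δ+1), Tp.eval (v i) * b i := by
    have hint := Lagrange.eq_interpolate (v := v) (s := range (δ+1)) (f := Tp) hinj (hdeglt Tp hdeg)
    calc Tp.coeff k 
        = (Lagrange.interpolate (range (δ+1)) v (fun i => Tp.eval (v i))).coeff k := by rw [← hint]
      _ = ∑ i ∈ range (δ+1), Tp.eval (v i) * b i := by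
          rw [Lagrange.interpolate_apply, finset_sum_coeff]
          exact Finset.sum_congr rfl (fun i _ => coeff_C_mul _)
  have hchebval : ∀ i ∈ range (δ+1), (Cheb δ).eval (v i) = (-1:ℝ)^i := by
    intro i hi
    simp only [hvdef]
    rw [Cheb_eval_cos]
    have harg : (δ:ℝ) * ((i:ℝ) * π / δ) = (i:ℝ) * π := by field_simp
    rw [harg]
    simpa using Real.cos_nat_mul_pi_sub 0 i
  have hChc : (Cheb δ).coeff k = ∑ i ∈ range (δ+1), (-1:ℝ)^i * b i := by
    have hint := Lagrange.eq_interpolate_of_eval_eq (v := v) (s := range (δ+1)) (f := Cheb δ)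
      hinj (hdeglt _ (Cheb_natDegree_le δ)) (r := fun i => (-1:ℝ)^i) hchebval
    rw [hint, Lagrange.interpolate_apply, finset_sum_coeff]
    exact Finset.sum_congr rfl fun i _ => coeff_C_mul _
  have hM0 : 0 ≤ M := le_trans (abs_nonneg _) (hval 0 (by norm_num))
  have hNsign : ∀ i ∈ range (δ+1), 0 ≤ (-1:ℝ)^e * N i := by
    have hsym : ∀ j, j ≤ δ → v (δ - j) = - v j := by
      intro j hj
      simp only [hvdef]
      have hc : ((δ - j : ℕ) : ℝ) = (δ:ℝ) - j := by
        rw [Nat.cast_sub hj]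
      rw [hc]
      have harg : ((δ:ℝ) - j) * π / δ = π - j * π / δ := by field_simp
      rw [harg, Real.cos_pi_sub]
    have hu0 : ∀ j, 0 ≤ u j := by
      intro j
      simp only [hudef]
      positivity
    have hC2 : ∀ a : ℝ, (X - C a) * (X + C a) = X^2 - C (a^2) := by
      intro a
      have h1 : (X - C a) * (X + C a) = X^2 - C a * C a := by ring
      rw [h1, ← C_mul, ← pow_two]
    have hpair : ∀ j, j ≤ δ → (X - C (v j)) * (X - C (v (δ - j))) = (expand ℝ 2) (X - C (u j)) := by
      intro j hj
      rw [hsym j hj, map_neg, sub_neg_eq_add, map_sub, expand_X, expand_C, hC2]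
    have hrefl : ∀ (a b : ℕ), a + b = δ + 1 → ∀ f : ℕ → Polynomial ℝ,
        ∏ j ∈ Ico b (δ+1), f j = ∏ j ∈ range a, f (δ - j) := by
      intro a b hab f
      apply Finset.prod_nbij' (i := fun j => δ - j) (j := fun j => δ - j)
      · intro x hx
        simp only [Finset.mem_Ico] at hx
        simp only [Finset.mem_range]
        omega
      · intro x hx
        simp only [Finset.mem_range] at hx
        simp only [Finset.mem_Ico]
        omega
      · intro x hx
        simp only [Finset.mem_Ico] at hx
        omega
      · intro x hx
        simp only [Finset.mem_range] at hx
        omega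
      · intro x hx
        simp only [Finset.mem_Ico] at hx
        congr 1
        omega
    intro i hi
    simp only [Finset.mem_range] at hi
    have hiδ : i ≤ δ := by omega
    have himem : i ∈ range (δ+1) := by simp only [Finset.mem_range]; omega
    simp only [hNdef]
    rcases Nat.even_or_odd δ with ⟨m, hm⟩ | ⟨m, hm⟩
    · -- δ = 2m even, k even, m ≥ 1
      have hm1 : 1 ≤ m := by omega
      have hkev : k % 2 = 0 := by omega
      have hk2 : 2 ≤ k := by omega
      have hvm : v m = 0 := by
        simp only [hvdef]
        have harg : (m:ℝ) * π / δ = π / 2 := by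
          have hδc : (δ:ℝ) = 2 * m := by push_cast [hm]; ring
          rw [hδc]
          have hmR : (0:ℝ) < m := by exact_mod_cast hm1
          field_simp
        rw [harg, Real.cos_pi_div_two]
      have hWeven : ∏ j ∈ range (δ+1), (X - C (v j)) 
          = X * (expand ℝ 2) (∏ j ∈ range m, (X - C (u j))) := by
        have hsplit : ∏ j ∈ range (δ+1), (X - C (v j)) 
            = (∏ j ∈ range m, (X - C (v j))) * ∏ j ∈ Ico m (δ+1), (X - C (v j)) := by
          rw [Finset.range_eq_Ico, ← Finset.prod_Ico_consecutive _ (by omega : 0 ≤ m) (by omega : m ≤ δ+1), ← Finset.range_eq_Ico]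
        have hbot : ∏ j ∈ Ico m (δ+1), (X - C (v j)) 
            = (X - C (v m)) * ∏ j ∈ Ico (m+1) (δ+1), (X - C (v j)) := 
          Finset.prod_eq_prod_Ico_succ_bot (by omega) _
        rw [hsplit, hbot, hrefl m (m+1) (by omega) _, hvm, map_zero, sub_zero]
        rw [show ∀ A B : Polynomial ℝ, A * (X * B) = X * (A * B) from by intros; ring]
        congr 1
        rw [← Finset.prod_mul_distrib, map_prod]
        apply Finset.prod_congr rfl
        intro j hj
        simp only [Finset.mem_range] at hj
        exact hpair j (by omega)
      by_cases him : i = m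
      · -- center node
        rw [him]
        have hmmem : m ∈ Finset.range (δ+1) := by simp only [Finset.mem_range]; omega
        have hkey : ∏ j ∈ (range (δ+1)).erase m, (X - C (v j)) 
            = (expand ℝ 2) (∏ j ∈ range m, (X - C (u j))) := by
          apply mul_left_cancel₀ (Polynomial.X_ne_zero (R := ℝ))
          have h1 : X * ∏ j ∈ (range (δ+1)).erase m, (X - C (v j)) 
              = ∏ j ∈ range (δ+1), (X - C (v j)) := by
            nth_rewrite 1 [show (X : Polynomial ℝ) = X - C (v m) from by rw [hvm, map_zero, sub_zero]]
            exact Finset.mul_prod_erase (range (δ+1)) (fun j => X - C (v j)) hmmem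
          rw [h1, hWeven]
        rw [hkey, coeff_expand (by norm_num)]
        rw [if_pos (by omega : 2 ∣ k)]
        have hcard : (range m).card = m := Finset.card_range m
        have hsgn := coeff_prod_X_sub_C_sign (range m) u (fun j _ => hu0 j) (k/2) (by rw [hcard]; omega)
        rw [hcard] at hsgn
        have hee : m - k/2 = e := by omega
        rw [hee] at hsgn
        exact hsgn
      · -- non-center node
        set i' := min i (δ - i) with hi'def
        have hi'm : i' < m := by omega
        have hi'mem : i' ∈ range m := by simp only [Finset.mem_range]; omega
        have hvi : (v i)^2 = u i' := by
          rcases le_total i (δ - i) with h | h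
          · have h1 : i' = i := by omega
            rw [h1]
          · have h1 : i' = δ - i := by omega
            rw [h1]
            simp only [hudef]
            rw [hsym i hiδ]
            ring
        have hkey : ∏ j ∈ (range (δ+1)).erase i, (X - C (v j)) 
            = (X + C (v i)) * (X * (expand ℝ 2) (∏ j ∈ (range m).erase i', (X - C (u j)))) := by
          apply mul_left_cancel₀ (X_sub_C_ne_zero (v i))
          have hWi : (X - C (v i)) * ∏ j ∈ (range (δ+1)).erase i, (X - C (v j)) 
              = ∏ j ∈ range (δ+1), (X - C (v j)) := 
            Finset.mul_prod_erase (range (δ+1)) (fun j => X - C (v j)) himem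
          have hui : (X - C (u i')) * ∏ j ∈ (range m).erase i', (X - C (u j)) 
              = ∏ j ∈ range m, (X - C (u j)) := 
            Finset.mul_prod_erase (range m) (fun j => X - C (u j)) hi'mem
          have hstep : (X - C (v i)) * ((X + C (v i)) * (X * (expand ℝ 2) (∏ j ∈ (range m).erase i', (X - C (u j)))))
              = X * ((expand ℝ 2) (X - C (u i')) * (expand ℝ 2) (∏ j ∈ (range m).erase i', (X - C (u j)))) := by
            rw [map_sub, expand_X, expand_C, ← hvi, ← hC2]
            ring
          rw [hWi, hWeven, hstep, ← map_mul, hui]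
        rw [hkey]
        set E := (expand ℝ 2) (∏ j ∈ (range m).erase i', (X - C (u j))) with hE
        obtain ⟨k', rfl⟩ : ∃ k', k = k' + 2 := ⟨k - 2, by omega⟩
        have hco : ((X + C (v i)) * (X * E)).coeff (k'+2) = E.coeff k' + (v i) * E.coeff (k'+1) := by
          rw [add_mul, coeff_add, coeff_C_mul]
          congr 1
          · rw [← mul_assoc, show (X : Polynomial ℝ) * X * E = X^2 * E from by ring, coeff_X_pow_mul]
          · rw [show k'+2 = (k'+1)+1 from by omega, coeff_X_mul]
        rw [hco, hE, coeff_expand (by norm_num), coeff_expand (by norm_num)]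
        rw [if_pos (by omega : 2 ∣ k'), if_neg (by omega : ¬ (2 ∣ (k'+1)))]
        rw [mul_zero, add_zero]
        have hcard : ((range m).erase i').card = m - 1 := by 
          rw [Finset.card_erase_of_mem hi'mem, Finset.card_range]
        have hsgn := coeff_prod_X_sub_C_sign ((range m).erase i') u (fun j _ => hu0 j) (k'/2) (by rw [hcard]; omega)
        rw [hcard] at hsgn
        have hee : (m-1) - k'/2 = e := by omega
        rw [hee] at hsgn
        exact hsgn
    · -- δ = 2m+1 odd, k odd
      have hkodd : k % 2 = 1 := by omega
      have hWodd : ∏ j ∈ range (δ+1), (X - C (v j)) 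
          = (expand ℝ 2) (∏ j ∈ range (m+1), (X - C (u j))) := by
        have hsplit : ∏ j ∈ range (δ+1), (X - C (v j)) 
            = (∏ j ∈ range (m+1), (X - C (v j))) * ∏ j ∈ Ico (m+1) (δ+1), (X - C (v j)) := by
          rw [Finset.range_eq_Ico, ← Finset.prod_Ico_consecutive _ (by omega : 0 ≤ m+1) (by omega : m+1 ≤ δ+1), ← Finset.range_eq_Ico]
        rw [hsplit, hrefl (m+1) (m+1) (by omega) _]
        rw [← Finset.prod_mul_distrib, map_prod]
        apply Finset.prod_congr rfl
        intro j hj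
        simp only [Finset.mem_range] at hj
        exact hpair j (by omega)
      set i' := min i (δ - i) with hi'def
      have hi'm : i' ≤ m := by omega
      have hi'mem : i' ∈ range (m+1) := by simp only [Finset.mem_range]; omega
      have hvi : (v i)^2 = u i' := by
        rcases le_total i (δ - i) with h | h
        · have h1 : i' = i := by omega
          rw [h1]
        · have h1 : i' = δ - i := by omega
          rw [h1]
          simp only [hudef]
          rw [hsym i hiδ]
          ring
      have hkey : ∏ j ∈ (range (δ+1)).erase i, (X - C (v j)) 
          = (X + C (v i)) * (expand ℝ 2) (∏ j ∈ (range (m+1)).erase i', (X - C (u j))) := by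
        apply mul_left_cancel₀ (X_sub_C_ne_zero (v i))
        have hWi : (X - C (v i)) * ∏ j ∈ (range (δ+1)).erase i, (X - C (v j)) 
            = ∏ j ∈ range (δ+1), (X - C (v j)) := 
          Finset.mul_prod_erase (range (δ+1)) (fun j => X - C (v j)) himem
        have hui : (X - C (u i')) * ∏ j ∈ (range (m+1)).erase i', (X - C (u j)) 
            = ∏ j ∈ range (m+1), (X - C (u j)) := 
          Finset.mul_prod_erase (range (m+1)) (fun j => X - C (u j)) hi'mem
        have hstep : (X - C (v i)) * ((X + C (v i)) * (expand ℝ 2) (∏ j ∈ (range (m+1)).erase i', (X - C (u j))))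
            = (expand ℝ 2) (X - C (u i')) * (expand ℝ 2) (∏ j ∈ (range (m+1)).erase i', (X - C (u j))) := by
          rw [map_sub, expand_X, expand_C, ← hvi, ← hC2]
          ring
        rw [hWi, hWodd, hstep, ← map_mul, hui]
      rw [hkey]
      set E := (expand ℝ 2) (∏ j ∈ (range (m+1)).erase i', (X - C (u j))) with hE
      obtain ⟨k', rfl⟩ : ∃ k', k = k' + 1 := ⟨k - 1, by omega⟩
      have hco : ((X + C (v i)) * E).coeff (k'+1) = E.coeff k' + (v i) * E.coeff (k'+1) := by
        rw [add_mul, coeff_add, coeff_C_mul, coeff_X_mul]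
      rw [hco, hE, coeff_expand (by norm_num), coeff_expand (by norm_num)]
      rw [if_pos (by omega : 2 ∣ k'), if_neg (by omega : ¬ (2 ∣ (k'+1)))]
      rw [mul_zero, add_zero]
      have hcard : ((range (m+1)).erase i').card = m := by 
        rw [Finset.card_erase_of_mem hi'mem, Finset.card_range]
        omega
      have hsgn := coeff_prod_X_sub_C_sign ((range (m+1)).erase i') u (fun j _ => hu0 j) (k'/2) (by rw [hcard]; omega)
      rw [hcard] at hsgn
      have hee : m - k'/2 = e := by omega
      rw [hee] at hsgn
      exact hsgn
  have hsq : ∀ (n : ℕ) (x : ℝ), 0 ≤ (-1:ℝ)^n * x → |x| = (-1:ℝ)^n * x := by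
    intro n x hx
    rcases Nat.even_or_odd n with hn | hn
    · rw [hn.neg_one_pow] at hx ⊢
      rw [one_mul] at hx ⊢
      exact abs_of_nonneg hx
    · rw [hn.neg_one_pow] at hx ⊢
      rw [abs_of_nonpos (by linarith)]
      ring
  have habs : ∀ i ∈ range (δ+1), |b i| = (-1:ℝ)^(i+e) * b i := by
    intro i hi
    have hiδ : i ≤ δ := by
      simp only [Finset.mem_range] at hi; omega
    have h1 := hD i hiδ
    have h2 := hNsign i hi
    rw [hbeq i, abs_mul, abs_inv]
    have hDabs : |D i| = (-1:ℝ)^i * D i := hsq i _ (le_of_lt h1)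
    have hNabs : |N i| = (-1:ℝ)^e * N i := hsq e _ h2
    rw [hDabs, hNabs, mul_inv]
    have hii : ((-1:ℝ)^i)⁻¹ = (-1:ℝ)^i := by
      rcases Nat.even_or_odd i with h | h
      · rw [h.neg_one_pow]; norm_num
      · rw [h.neg_one_pow]; norm_num
    rw [hii, pow_add]
    ring
  have hsum : ∑ i ∈ range (δ+1), |b i| = (-1:ℝ)^e * (Cheb δ).coeff k := by
    rw [hChc, Finset.mul_sum]
    apply Finset.sum_congr rfl
    intro i hi
    rw [habs i hi, pow_add]
    ring
  have hest : |Tp.coeff k| ≤ M * ((-1:ℝ)^e * (Cheb δ).coeff k) := by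
    rw [hTpc]
    calc |∑ i ∈ range (δ+1), Tp.eval (v i) * b i| 
        ≤ ∑ i ∈ range (δ+1), |Tp.eval (v i) * b i| := Finset.abs_sum_le_sum_abs _ _
      _ ≤ ∑ i ∈ range (δ+1), M * |b i| := by
          apply Finset.sum_le_sum
          intro i hi
          rw [abs_mul]
          exact mul_le_mul_of_nonneg_right (hval _ (hvIcc i)) (abs_nonneg _)
      _ = M * ∑ i ∈ range (δ+1), |b i| := by rw [Finset.mul_sum]
      _ = M * ((-1:ℝ)^e * (Cheb δ).coeff k) := by rw [hsum]
  have hfact := Cheb_coeff_fact δ k e he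
  calc (k.factorial:ℝ) * |Tp.coeff k| 
      ≤ (k.factorial:ℝ) * (M * ((-1:ℝ)^e * (Cheb δ).coeff k)) := by
        exact mul_le_mul_of_nonneg_left hest (by positivity)
    _ = M * ((k.factorial:ℝ) * ((-1:ℝ)^e * (Cheb δ).coeff k)) := by ring
    _ ≤ M * (δ:ℝ)^k := mul_le_mul_of_nonneg_left hfact.2 hM0
    _ = (δ:ℝ)^k * M := mul_comm _ _

lemma coeff_comp_neg_X (p : Polynomial ℝ) (n : ℕ) :
    (p.comp (-X)).coeff n = (-1:ℝ)^n * p.coeff n := by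
  induction p using Polynomial.induction_on' with
  | add p q hp hq =>
    rw [add_comp, coeff_add, hp, hq, coeff_add]
    ring
  | monomial j a =>
    rw [monomial_comp]
    have h1 : (-X : Polynomial ℝ)^j = C ((-1:ℝ)^j) * X^j := by
      rw [neg_pow, map_pow, map_neg, map_one]
    rw [h1, ← mul_assoc, ← C_mul, coeff_C_mul, coeff_X_pow, coeff_monomial]
    by_cases h : n = j
    · subst h
      simp [mul_comm]
    · simp [h, Ne.symm h]

theorem markov_type_inequality (S : Polynomial ℝ) (d : ℕ) (hS : S.natDegree ≤ d)
    (k : ℕ) :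
    |((Polynomial.derivative)^[k] S).eval 0| ≤
      (d : ℝ) ^ k * sSup ((fun x => |S.eval x|) '' Icc (-1) 1) := by
  set M := sSup ((fun x => |S.eval x|) '' Icc (-1) 1) with hMdef
  have hbdd : BddAbove ((fun x => |S.eval x|) '' Icc (-1) 1) :=
    (isCompact_Icc.image (S.continuous.abs)).bddAbove
  have hM : ∀ x : ℝ, x ∈ Icc (-1:ℝ) 1 → |S.eval x| ≤ M := fun x hx => le_csSup hbdd ⟨x, hx, rfl⟩
  have hM0 : 0 ≤ M := le_trans (abs_nonneg _) (hM 0 (Set.mem_Icc.mpr (by norm_num)))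
  have hL : ((Polynomial.derivative)^[k] S).eval 0 = (k.factorial : ℝ) * S.coeff k := by
    rw [← coeff_zero_eq_eval_zero, Polynomial.coeff_iterate_derivative, zero_add,
      Nat.descFactorial_self, nsmul_eq_mul]
  rcases Nat.eq_zero_or_pos k with rfl | hk1
  · simpa using hM 0 (Set.mem_Icc.mpr (by norm_num))
  by_cases hkd : d < k
  · have hc : S.coeff k = 0 := coeff_eq_zero_of_natDegree_lt (by omega)
    rw [hL, hc, mul_zero, abs_zero]
    exact mul_nonneg (pow_nonneg (Nat.cast_nonneg d) k) hM0
  push_neg at hkd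
  set Tp : Polynomial ℝ := C (2⁻¹ : ℝ) * (S + C ((-1:ℝ)^k) * S.comp (-X)) with hTp
  have h11 : (-1:ℝ)^k * (-1:ℝ)^k = 1 := by
    rw [← pow_add]; exact (Even.add_self k).neg_one_pow
  have hTpco : ∀ N : ℕ, Tp.coeff N = 2⁻¹ * (S.coeff N + (-1:ℝ)^k * ((-1:ℝ)^N * S.coeff N)) := by
    intro N
    simp only [hTp]
    rw [coeff_C_mul, coeff_add, coeff_C_mul, coeff_comp_neg_X]
  have hTc : Tp.coeff k = S.coeff k := by
    rw [hTpco k, show (-1:ℝ)^k * ((-1:ℝ)^k * S.coeff k) = ((-1:ℝ)^k * (-1:ℝ)^k) * S.coeff k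
      from by ring, h11]
    ring
  have hTeval : ∀ x : ℝ, Tp.eval x = 2⁻¹ * (S.eval x + (-1:ℝ)^k * S.eval (-x)) := by
    intro x
    simp only [hTp, eval_mul, eval_C, eval_add, eval_comp, eval_neg, eval_X]
  have hTval : ∀ x ∈ Icc (-1:ℝ) 1, |Tp.eval x| ≤ M := by
    intro x hx
    rw [hTeval]
    have h1 := hM x hx
    have hx' : -x ∈ Icc (-1:ℝ) 1 := by
      simp only [Set.mem_Icc] at hx ⊢
      constructor <;> linarith [hx.1, hx.2]
    have h2 := hM (-x) hx'
    have habs : |(-1:ℝ)^k * S.eval (-x)| = |S.eval (-x)| := by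
      rw [abs_mul, abs_pow, abs_neg, abs_one, one_pow, one_mul]
    calc |2⁻¹ * (S.eval x + (-1:ℝ)^k * S.eval (-x))|
        ≤ 2⁻¹ * (|S.eval x| + |(-1:ℝ)^k * S.eval (-x)|) := by
          rw [abs_mul, abs_of_pos (by norm_num : (0:ℝ) < 2⁻¹)]
          exact mul_le_mul_of_nonneg_left (abs_add_le _ _) (by norm_num)
      _ ≤ M := by rw [habs]; linarith
  obtain ⟨δ, hkδ, hδd, hpar, hbig⟩ : ∃ δ, k ≤ δ ∧ δ ≤ d ∧ (δ - k) % 2 = 0 ∧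
      ∀ N, δ < N → N ≤ d → (k + N) % 2 = 1 := by
    by_cases hp : (d - k) % 2 = 0
    · exact ⟨d, hkd, le_refl d, by omega, fun N h1 h2 => by omega⟩
    · exact ⟨d - 1, by omega, by omega, by omega, fun N h1 h2 => by omega⟩
  have hTdeg : Tp.natDegree ≤ δ := by
    rw [natDegree_le_iff_coeff_eq_zero]
    intro N hN
    by_cases hNd : d < N
    · rw [hTpco N, coeff_eq_zero_of_natDegree_lt (by omega)]
      ring
    · have hodd : (k+N) % 2 = 1 := hbig N (by omega) (by omega)
      have hneg : (-1:ℝ)^k * (-1:ℝ)^N = -1 := by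
        rw [← pow_add]
        exact (Nat.odd_iff.mpr hodd).neg_one_pow
      rw [hTpco N, show (-1:ℝ)^k * ((-1:ℝ)^N * S.coeff N) = ((-1:ℝ)^k * (-1:ℝ)^N) * S.coeff N
        from by ring, hneg]
      ring
  obtain ⟨e, he⟩ : ∃ e, δ = k + 2*e := ⟨(δ-k)/2, by omega⟩
  have hkey := key δ k e hk1 he Tp hTdeg M hTval
  rw [hL, abs_mul, Nat.abs_cast]
  calc (k.factorial:ℝ) * |S.coeff k| = (k.factorial:ℝ) * |Tp.coeff k| := by rw [hTc]
    _ ≤ (δ:ℝ)^k * M := hkey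
    _ ≤ (d:ℝ)^k * M := by
        apply mul_le_mul_of_nonneg_right _ hM0
        exact pow_le_pow_left₀ (Nat.cast_nonneg δ) (by exact_mod_cast hδd) k
end

section
/- (Regularity integral estimate, from proof of Claim 4.8) Let a : [1,∞) → (0,∞) be a C^1 non-decreasing function, and for n ∈ ℕ set m_k = ∏_{j=1}^k a(j) (m_0 = 1). Suppose sup_{1≤s≤n} s·a'(s)/a(s) ≤ γ − 1 for some γ ≥ 1. Then for every 0 ≤ k < n: m_n^{k/n} / m_k ≤ e^{(n-k)(γ-1)}. -/
/-!
With `ℓ = log ∘ a`, the regularity bound says that `ℓ s - (γ - 1) log s` is non-increasing on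
`[1, n]`, so `ℓ j - ℓ i ≤ (γ - 1) log (n / i)` whenever `1 ≤ i ≤ k < j ≤ n`. Summing over such pairs,
`k log m_n - n log m_k = ∑_{j > k} ∑_{i ≤ k} (ℓ j - ℓ i) ≤ (n - k)(γ - 1) log (n ^ k / k!)`,
and `n ^ k / k! ≤ e ^ n` because it is one term of the exponential series.
-/

open Set Finset Real
open scoped Nat

theorem antitoneOn_log_comp_sub_mul_log {a : ℝ → ℝ} {b c : ℝ}
    (ha : DifferentiableOn ℝ a (Ici 1)) (hapos : ∀ s ∈ Ici (1:ℝ), 0 < a s)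
    (hreg : ∀ s ∈ Icc (1:ℝ) b, s * derivWithin a (Ici 1) s / a s ≤ c) :
    AntitoneOn (fun s => log (a s) - c * log s) (Icc 1 b) := by
  have hderiv : ∀ x ∈ Ioo 1 b,
      HasDerivAt (fun s => log (a s) - c * log s) (deriv a x / a x - c * x⁻¹) x := by
    intro x hx
    have hax : DifferentiableAt ℝ a x := ha.differentiableAt (Ici_mem_nhds hx.1)
    exact (hax.hasDerivAt.log (hapos x hx.1.le).ne').sub
      ((hasDerivAt_log (by linarith [hx.1])).const_mul c)
  refine antitoneOn_of_deriv_nonpos (convex_Icc 1 b) ?_ ?_ ?_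
  · refine ((ha.continuousOn.mono Icc_subset_Ici_self).log fun x hx => ?_).sub
      (continuousOn_const.mul (continuousOn_log.mono fun x hx => ?_))
    · exact (hapos x hx.1).ne'
    · exact ne_of_gt (by linarith [hx.1])
  · rw [interior_Icc]
    exact fun x hx => (hderiv x hx).differentiableAt.differentiableWithinAt
  · rw [interior_Icc]
    intro x hx
    have hx0 : 0 < x := by linarith [hx.1]
    have hdw : derivWithin a (Ici 1) x = deriv a x := derivWithin_of_mem_nhds (Ici_mem_nhds hx.1)
    have hr := hreg x (Ioo_subset_Icc_self hx)
    rw [hdw, mul_div_assoc] at hr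
    rw [(hderiv x hx).deriv, sub_nonpos, ← div_eq_mul_inv, le_div_iff₀' hx0]
    exact hr

theorem sum_Icc_log_sub_log_le {x : ℝ} (hx : 0 < x) (k : ℕ) :
    ∑ i ∈ Icc 1 k, (log x - log i) ≤ x := by
  have hfac : ∑ i ∈ Icc 1 k, log (i : ℝ) = log (k ! : ℝ) := by
    rw [← prod_Ico_id_eq_factorial, Finset.Ico_add_one_right_eq_Icc, Nat.cast_prod, log_prod]
    intro i hi
    exact Nat.cast_ne_zero.2 (Nat.one_le_iff_ne_zero.1 (Finset.mem_Icc.1 hi).1)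
  calc ∑ i ∈ Icc 1 k, (log x - log i) = log (x ^ k / k !) := by
        rw [sum_sub_distrib, hfac, log_div (by positivity) (by positivity), log_pow]
        simp
    _ ≤ x := (log_le_iff_le_exp (by positivity)).2 (pow_div_factorial_le_exp x hx.le k)

theorem mul_sum_Icc_sub_sum_Icc_le {L : ℕ → ℝ} {c : ℝ} {k n : ℕ} (hc : 0 ≤ c) (hkn : k < n)
    (hL : ∀ i j : ℕ, 1 ≤ i → i ≤ j → j ≤ n → L j - L i ≤ c * (log j - log i)) :
    (k / n : ℝ) * ∑ j ∈ Icc 1 n, L j - ∑ i ∈ Icc 1 k, L i ≤ (n - k) * c := by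
  have hn : (0 : ℝ) < n := by exact_mod_cast (Nat.zero_le k).trans_lt hkn
  have hL_le : ∀ i ∈ Finset.Icc 1 k, ∀ j ∈ Finset.Ioc k n, L j - L i ≤ c * (log n - log i) := by
    intro i hi j hj
    obtain ⟨hi1, hik⟩ := Finset.mem_Icc.1 hi
    obtain ⟨hkj, hjn⟩ := Finset.mem_Ioc.1 hj
    have hlog_j : log j ≤ log n :=
      log_le_log (Nat.cast_pos.2 (by omega)) (Nat.cast_le.2 hjn)
    exact (hL i j hi1 (by omega) hjn).trans
      (mul_le_mul_of_nonneg_left (sub_le_sub_right hlog_j _) hc)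
  set S := ∑ i ∈ Icc 1 k, L i
  set T := ∑ j ∈ Ioc k n, L j
  have hsplit : ∑ j ∈ Icc 1 n, L j = S + T :=
    (sum_Ioc_consecutive L (Nat.zero_le k) hkn.le).symm
  have hdouble : ∑ j ∈ Ioc k n, ∑ i ∈ Icc 1 k, (L j - L i) = k * T - (n - k) * S := by
    simp only [sum_sub_distrib, sum_const, Nat.card_Icc, Nat.card_Ioc, nsmul_eq_mul, ← mul_sum,
      Nat.cast_sub hkn.le]
    simp [S, T]
  have hbound : ∑ j ∈ Ioc k n, ∑ i ∈ Icc 1 k, (L j - L i) ≤ ∑ j ∈ Ioc k n, c * n := by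
    refine sum_le_sum fun j hj => ?_
    calc ∑ i ∈ Icc 1 k, (L j - L i) ≤ ∑ i ∈ Icc 1 k, c * (log n - log i) :=
          sum_le_sum fun i hi => hL_le i hi j hj
      _ ≤ c * n := by
          rw [← mul_sum]
          exact mul_le_mul_of_nonneg_left (sum_Icc_log_sub_log_le hn k) hc
  rw [sum_const, Nat.card_Ioc, nsmul_eq_mul, Nat.cast_sub hkn.le, hdouble] at hbound
  rw [hsplit, div_mul_eq_mul_div, sub_le_iff_le_add, div_le_iff₀ hn]
  nlinarith

theorem regularity_integral_estimate_general (a : ℝ → ℝ)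
    (ha : ContDiffOn ℝ 1 a (Ici 1)) (hapos : ∀ s ∈ Ici (1:ℝ), 0 < a s)
    (n : ℕ) (γ : ℝ) (hγ : 1 ≤ γ)
    (hreg : ∀ s ∈ Icc (1:ℝ) n, s * derivWithin a (Ici 1) s / a s ≤ γ - 1)
    (m : ℕ → ℝ) (hm : ∀ k, m k = ∏ j ∈ Finset.Icc 1 k, a j) :
    ∀ k < n, (m n) ^ ((k : ℝ) / (n : ℝ)) / m k ≤
      Real.exp (((n : ℝ) - k) * (γ - 1)) := by
  intro k hkn
  have ha_pos_nat : ∀ j : ℕ, 1 ≤ j → 0 < a j := fun j hj =>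
    hapos j (Set.mem_Ici.2 (Nat.one_le_cast.2 hj))
  have hm_pos : ∀ l, 0 < m l := fun l => by
    rw [hm]
    exact prod_pos fun j hj => ha_pos_nat j (Finset.mem_Icc.1 hj).1
  have hlog_m : ∀ l, log (m l) = ∑ j ∈ Finset.Icc 1 l, log (a j) := fun l => by
    rw [hm, log_prod]
    exact fun j hj => (ha_pos_nat j (Finset.mem_Icc.1 hj).1).ne'
  have hstep : ∀ i j : ℕ, 1 ≤ i → i ≤ j → j ≤ n →
      log (a j) - log (a i) ≤ (γ - 1) * (log j - log i) := by
    intro i j hi hij hjn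
    have hmem : ∀ l : ℕ, 1 ≤ l → l ≤ n → (l : ℝ) ∈ Icc (1 : ℝ) n := fun l h1 h2 =>
      ⟨Nat.one_le_cast.2 h1, Nat.cast_le.2 h2⟩
    have := antitoneOn_log_comp_sub_mul_log (ha.differentiableOn one_ne_zero) hapos hreg
      (hmem i hi (hij.trans hjn)) (hmem j (hi.trans hij) hjn) (Nat.cast_le.2 hij)
    simp only at this
    linarith
  rw [rpow_def_of_pos (hm_pos n), div_le_iff₀ (hm_pos k), ← exp_log (hm_pos k), ← exp_add,
    exp_le_exp, hlog_m, hlog_m, mul_comm, ← sub_le_iff_le_add]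
  exact mul_sum_Icc_sub_sum_Icc_le (sub_nonneg.2 hγ) hkn hstep

theorem regularity_integral_estimate (a : ℝ → ℝ)
    (ha : ContDiffOn ℝ 1 a (Ici 1)) (hapos : ∀ s ∈ Ici (1:ℝ), 0 < a s)
    (hamono : MonotoneOn a (Ici 1))
    (n : ℕ) (γ : ℝ) (hγ : 1 ≤ γ)
    (hreg : ∀ s ∈ Icc (1:ℝ) n, s * derivWithin a (Ici 1) s / a s ≤ γ - 1)
    (m : ℕ → ℝ) (hm : ∀ k, m k = ∏ j ∈ Finset.Icc 1 k, a j) :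
    ∀ k < n, (m n) ^ ((k : ℝ) / (n : ℝ)) / m k ≤
      Real.exp (((n : ℝ) - k) * (γ - 1)) :=
  regularity_integral_estimate_general a ha hapos n γ hγ hreg m hm
end
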